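/- arXiv:1605.00267 — 5 statements merged into one kernel-verified Lean document; each statement's English description precedes it below -/
import Mathlib

section
/- Let n, N ≥ 1, K_i ⊂ ℝⁿ nonempty compact convex (i = 1,…,N), and let x_i^k, v_i^k, v̂_i^k ∈ ℝⁿ evolve by: v_i^0 = x_i^0 ∈ K_i, v̂_i^k = ∑_{j=1}^N [W(k)]_{ij} v_j^k, x_i^{k+1} = Π_{K_i}(x_i^k − α_k F_i(x_i^k, N v̂_i^k)), v_i^{k+1} = v̂_i^k + x_i^{k+1} − x_i^k, where each W(k) is doubly stochastic, Π_{K_i} is the Euclidean projection onto K_i, α_k ≥ 0, and ‖F_i(x_i^k, N v̂_i^k)‖ ≤ C for all i, k. Define the transition matrices Φ(k,s) = W(k)W(k−1)⋯W(s) for 0 ≤ s ≤ k and y^k = (1/N)∑_{i=1}^N v_i^k, and suppose there are θ > 0 and β ∈ (0,1) with |[Φ(k,s)]_{ij} − 1/N| ≤ θ β^{k−s} for all k ≥ s ≥ 0 and all i, j. Then for all i and all k ≥ 1: ‖y^k − v̂_i^k‖ ≤ θ β^k M + θ N C ∑_{s=1}^k β^{k−s} α_{s−1}, where M = ∑_{j=1}^N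 max_{x_j ∈ K_j} ‖x_j‖. -/
open RealInnerProductSpace in
lemma proj_step {E : Type*} [NormedAddCommGroup E] [InnerProductSpace ℝ E]
    {K : Set E} (hK : Convex ℝ K) {a b u : E} (ha : a ∈ K) (hb : b ∈ K)
    (hmin : ∀ z ∈ K, ‖u - b‖ ≤ ‖u - z‖) : ‖b - a‖ ≤ ‖u - a‖ := by
  haveI : Nonempty K := ⟨⟨b, hb⟩⟩
  have hinf : ‖u - b‖ = ⨅ w : K, ‖u - (w : E)‖ := by
    apply le_antisymm
    · exact le_ciInf fun w => hmin w w.2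
    · have hbdd : BddBelow (Set.range fun w : K => ‖u - (w : E)‖) :=
        ⟨0, by rintro r ⟨w, rfl⟩; positivity⟩
      exact ciInf_le hbdd ⟨b, hb⟩
  have hvar := (norm_eq_iInf_iff_real_inner_le_zero hK hb).mp hinf a ha
  have h2 : ⟪b - u, b - a⟫ ≤ 0 := by
    have : ⟪b - u, b - a⟫ = ⟪u - b, a - b⟫ := by
      rw [show b - u = -(u - b) by abel, show b - a = -(a - b) by abel, inner_neg_neg]
    linarith [this ▸ hvar]
  have h1 : ‖b - a‖ ^ 2 ≤ ⟪u - a, b - a⟫ := by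
    have hsplit : ⟪b - a, b - a⟫ = ⟪b - u, b - a⟫ + ⟪u - a, b - a⟫ := by
      rw [← inner_add_left]; congr 1; abel
    have := real_inner_self_eq_norm_sq (b - a)
    nlinarith [hsplit]
  have h3 := real_inner_le_norm (u - a) (b - a)
  nlinarith [norm_nonneg (b - a), norm_nonneg (u - a)]

lemma mix_sum {E : Type*} [AddCommMonoid E] [Module ℝ E] {N : ℕ}
    (A B : Matrix (Fin N) (Fin N) ℝ) (i : Fin N) (g : Fin N → E) :
    ∑ j, A i j • ∑ l, B j l • g l = ∑ l, (A * B) i l • g l := by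
  simp_rw [Finset.smul_sum, smul_smul, Matrix.mul_apply, Finset.sum_smul]
  exact Finset.sum_comm
/-- Disagreement estimate for the synchronous algorithm.  Under doubly stochastic
weights `W(k)` whose transition products `Φ(k,s)` converge geometrically to `(1/N)𝟙𝟙ᵀ`
(with constants `θ, β`), stepsizes `α_k ≥ 0`, uniformly bounded map values
`‖F_i(x_i^k, N v̂_i^k)‖ ≤ C`, and the mixing/projection/estimate-update recursions, the average
`y^k = (1/N)∑_i v_i^k` satisfies
`‖y^k − v̂_i^k‖ ≤ θ β^k M + θ N C ∑_{s=1}^k β^(k−s) α_{s−1}` for all `i` and `k ≥ 1`,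
where `M = ∑_j max_{x ∈ K_j} ‖x‖`. -/
theorem stmt_3 (n N : ℕ) (hn : 1 ≤ n) (hN : 1 ≤ N)
    (Kset : Fin N → Set (EuclideanSpace ℝ (Fin n)))
    (hne : ∀ i, (Kset i).Nonempty) (hcpt : ∀ i, IsCompact (Kset i))
    (hcvx : ∀ i, Convex ℝ (Kset i))
    (F : Fin N → EuclideanSpace ℝ (Fin n) → EuclideanSpace ℝ (Fin n) →
      EuclideanSpace ℝ (Fin n))
    (W : ℕ → Matrix (Fin N) (Fin N) ℝ)
    (hWnn : ∀ k i j, 0 ≤ W k i j)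
    (hWrow : ∀ k i, ∑ j, W k i j = 1) (hWcol : ∀ k j, ∑ i, W k i j = 1)
    (α : ℕ → ℝ) (hα : ∀ k, 0 ≤ α k) (C : ℝ)
    (x v vhat : ℕ → Fin N → EuclideanSpace ℝ (Fin n))
    (hx0 : ∀ i, x 0 i ∈ Kset i) (hv0 : ∀ i, v 0 i = x 0 i)
    (hvhat : ∀ k i, vhat k i = ∑ j, W k i j • v k j)
    (hproj : ∀ k i, x (k + 1) i ∈ Kset i ∧ ∀ z ∈ Kset i,
      ‖x k i - α k • F i (x k i) ((N : ℝ) • vhat k i) - x (k + 1) i‖ ≤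
        ‖x k i - α k • F i (x k i) ((N : ℝ) • vhat k i) - z‖)
    (hv : ∀ k i, v (k + 1) i = vhat k i + x (k + 1) i - x k i)
    (hC : ∀ k i, ‖F i (x k i) ((N : ℝ) • vhat k i)‖ ≤ C)
    (Φ : ℕ → ℕ → Matrix (Fin N) (Fin N) ℝ)
    (hΦd : ∀ k, Φ k k = W k)
    (hΦr : ∀ k s, s ≤ k → Φ (k + 1) s = W (k + 1) * Φ k s)
    (θ β : ℝ) (hθ : 0 < θ) (hβ0 : 0 < β) (hβ1 : β < 1)
    (hgeo : ∀ s k, s ≤ k → ∀ i j, |Φ k s i j - (N : ℝ)⁻¹| ≤ θ * β ^ (k - s))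
    (y : ℕ → EuclideanSpace ℝ (Fin n)) (hy : ∀ k, y k = (N : ℝ)⁻¹ • ∑ i, v k i)
    (M : ℝ) (hM : M = ∑ j, sSup ((fun z => ‖z‖) '' Kset j)) :
    ∀ i, ∀ k ≥ 1, ‖y k - vhat k i‖ ≤
      θ * β ^ k * M + θ * N * C * ∑ s ∈ Finset.Icc 1 k, β ^ (k - s) * α (s - 1) := by

  have hmem : ∀ s j, x s j ∈ Kset j := by
    intro s j; cases s with
    | zero => exact hx0 j
    | succ t => exact (hproj t j).1
  have hC0 : 0 ≤ C := le_trans (norm_nonneg _) (hC 0 ⟨0, hN⟩)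
  have hstep : ∀ s j, ‖x (s + 1) j - x s j‖ ≤ C * α s := by
    intro s j
    have h := proj_step (hcvx j) (hmem s j) (hproj s j).1 (fun z hz => (hproj s j).2 z hz)
    calc ‖x (s + 1) j - x s j‖
        ≤ ‖(x s j - α s • F j (x s j) ((N : ℝ) • vhat s j)) - x s j‖ := h
      _ = α s * ‖F j (x s j) ((N : ℝ) • vhat s j)‖ := by
          rw [show (x s j - α s • F j (x s j) ((N : ℝ) • vhat s j)) - x s j
              = -(α s • F j (x s j) ((N : ℝ) • vhat s j)) by abel, norm_neg, norm_smul,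
            Real.norm_eq_abs, abs_of_nonneg (hα s)]
      _ ≤ α s * C := mul_le_mul_of_nonneg_left (hC s j) (hα s)
      _ = C * α s := mul_comm _ _
  have hx0M : ∑ j, ‖x 0 j‖ ≤ M := by
    rw [hM]
    refine Finset.sum_le_sum fun j _ => ?_
    exact le_csSup ((hcpt j).image continuous_norm).bddAbove ⟨x 0 j, hx0 j, rfl⟩
  have hvhatsum : ∀ k, ∑ j, vhat k j = ∑ j, v k j := by
    intro k
    calc ∑ j, vhat k j = ∑ j, ∑ l, W k j l • v k l := by simp [hvhat]
      _ = ∑ l, ∑ j, W k j l • v k l := Finset.sum_comm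
      _ = ∑ l, v k l := by
          refine Finset.sum_congr rfl fun l _ => ?_
          rw [← Finset.sum_smul, hWcol, one_smul]
  have ykey : ∀ k, y k = (N : ℝ)⁻¹ • ∑ j, x 0 j
      + ∑ s ∈ Finset.Icc 1 k, (N : ℝ)⁻¹ • ∑ j, (x s j - x (s - 1) j) := by
    intro k; induction k with
    | zero => simp [hy, hv0]
    | succ k ih =>
      have hsum : ∑ j, v (k + 1) j = (∑ j, v k j) + ∑ j, (x (k + 1) j - x k j) := by
        rw [← hvhatsum k, ← Finset.sum_add_distrib]
        refine Finset.sum_congr rfl fun j _ => ?_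
        rw [hv k j]; abel
      rw [hy, hsum, smul_add, ← hy k, ih, Finset.sum_Icc_succ_top (by omega : 1 ≤ k + 1)]
      simp only [Nat.add_sub_cancel]
      abel
  have key : ∀ k i, vhat k i = (∑ j, Φ k 0 i j • x 0 j)
      + ∑ s ∈ Finset.Icc 1 k, ∑ j, Φ k s i j • (x s j - x (s - 1) j) := by
    intro k; induction k with
    | zero => intro i; simp [hvhat, hv0, hΦd]
    | succ k ih =>
      intro i
      have e1 : vhat (k + 1) i = (∑ j, W (k + 1) i j • vhat k j)
          + ∑ j, W (k + 1) i j • (x (k + 1) j - x k j) := by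
        rw [hvhat, ← Finset.sum_add_distrib]
        refine Finset.sum_congr rfl fun j _ => ?_
        rw [hv k j, show vhat k j + x (k + 1) j - x k j
            = vhat k j + (x (k + 1) j - x k j) by abel, smul_add]
      have e2 : ∑ j, W (k + 1) i j • vhat k j
          = (∑ l, Φ (k + 1) 0 i l • x 0 l)
            + ∑ s ∈ Finset.Icc 1 k, ∑ l, Φ (k + 1) s i l • (x s l - x (s - 1) l) := by
        calc ∑ j, W (k + 1) i j • vhat k j
            = ∑ j, (W (k + 1) i j • ∑ l, Φ k 0 j l • x 0 l
              + ∑ s ∈ Finset.Icc 1 k, W (k + 1) i j • ∑ l, Φ k s j l • (x s l - x (s - 1) l)) := by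
              refine Finset.sum_congr rfl fun j _ => ?_
              rw [ih j, smul_add]
              congr 1
              exact Finset.smul_sum
          _ = (∑ j, W (k + 1) i j • ∑ l, Φ k 0 j l • x 0 l)
              + ∑ j, ∑ s ∈ Finset.Icc 1 k, W (k + 1) i j • ∑ l, Φ k s j l • (x s l - x (s - 1) l) :=
              Finset.sum_add_distrib
          _ = (∑ l, Φ (k + 1) 0 i l • x 0 l)
              + ∑ s ∈ Finset.Icc 1 k, ∑ l, Φ (k + 1) s i l • (x s l - x (s - 1) l) := by
              congr 1
              · rw [mix_sum, ← hΦr k 0 (Nat.zero_le k)]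
              · rw [Finset.sum_comm]
                refine Finset.sum_congr rfl fun s hs => ?_
                rw [mix_sum, ← hΦr k s (Finset.mem_Icc.mp hs).2]
      rw [e1, e2, Finset.sum_Icc_succ_top (by omega : 1 ≤ k + 1)]
      simp only [Nat.add_sub_cancel, hΦd (k + 1)]
      abel
  intro i k hk
  have hdiff : y k - vhat k i = (∑ j, ((N : ℝ)⁻¹ - Φ k 0 i j) • x 0 j)
      + ∑ s ∈ Finset.Icc 1 k, ∑ j, ((N : ℝ)⁻¹ - Φ k s i j) • (x s j - x (s - 1) j) := by
    rw [ykey k, key k i]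
    simp only [sub_smul, smul_sub, Finset.smul_sum, Finset.sum_sub_distrib,
      Finset.sum_add_distrib]
    abel
  have hgeo' : ∀ s, s ≤ k → ∀ j, |(N : ℝ)⁻¹ - Φ k s i j| ≤ θ * β ^ (k - s) := by
    intro s hs j; rw [abs_sub_comm]; exact hgeo s k hs i j
  have hT1 : ‖∑ j, ((N : ℝ)⁻¹ - Φ k 0 i j) • x 0 j‖ ≤ θ * β ^ k * M := by
    calc ‖∑ j, ((N : ℝ)⁻¹ - Φ k 0 i j) • x 0 j‖
        ≤ ∑ j, ‖((N : ℝ)⁻¹ - Φ k 0 i j) • x 0 j‖ := norm_sum_le _ _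
      _ = ∑ j, |(N : ℝ)⁻¹ - Φ k 0 i j| * ‖x 0 j‖ := by
          simp [norm_smul, Real.norm_eq_abs]
      _ ≤ ∑ j, (θ * β ^ k) * ‖x 0 j‖ := by
          refine Finset.sum_le_sum fun j _ => ?_
          exact mul_le_mul_of_nonneg_right (by simpa using hgeo' 0 (Nat.zero_le k) j)
            (norm_nonneg _)
      _ = (θ * β ^ k) * ∑ j, ‖x 0 j‖ := (Finset.mul_sum _ _ _).symm
      _ ≤ θ * β ^ k * M := by
          refine mul_le_mul_of_nonneg_left hx0M (by positivity)
  have hT2 : ‖∑ s ∈ Finset.Icc 1 k, ∑ j, ((N : ℝ)⁻¹ - Φ k s i j) • (x s j - x (s - 1) j)‖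
      ≤ θ * N * C * ∑ s ∈ Finset.Icc 1 k, β ^ (k - s) * α (s - 1) := by
    calc ‖∑ s ∈ Finset.Icc 1 k, ∑ j, ((N : ℝ)⁻¹ - Φ k s i j) • (x s j - x (s - 1) j)‖
        ≤ ∑ s ∈ Finset.Icc 1 k, ‖∑ j, ((N : ℝ)⁻¹ - Φ k s i j) • (x s j - x (s - 1) j)‖ :=
          norm_sum_le _ _
      _ ≤ ∑ s ∈ Finset.Icc 1 k, (θ * β ^ (k - s)) * ((N : ℝ) * (C * α (s - 1))) := by
          refine Finset.sum_le_sum fun s hs => ?_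
          obtain ⟨hs1, hs2⟩ := Finset.mem_Icc.mp hs
          have hΔ : ∀ j, ‖x s j - x (s - 1) j‖ ≤ C * α (s - 1) := by
            intro j
            have h := hstep (s - 1) j
            rwa [Nat.sub_add_cancel hs1] at h
          calc ‖∑ j, ((N : ℝ)⁻¹ - Φ k s i j) • (x s j - x (s - 1) j)‖
              ≤ ∑ j, ‖((N : ℝ)⁻¹ - Φ k s i j) • (x s j - x (s - 1) j)‖ := norm_sum_le _ _
            _ = ∑ j, |(N : ℝ)⁻¹ - Φ k s i j| * ‖x s j - x (s - 1) j‖ := by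
                simp [norm_smul, Real.norm_eq_abs]
            _ ≤ ∑ _j : Fin N, (θ * β ^ (k - s)) * (C * α (s - 1)) := by
                refine Finset.sum_le_sum fun j _ => ?_
                exact mul_le_mul (hgeo' s hs2 j) (hΔ j) (norm_nonneg _) (by positivity)
            _ = (θ * β ^ (k - s)) * ((N : ℝ) * (C * α (s - 1))) := by
                rw [Finset.sum_const, Finset.card_univ, Fintype.card_fin, nsmul_eq_mul]
                ring
      _ = θ * N * C * ∑ s ∈ Finset.Icc 1 k, β ^ (k - s) * α (s - 1) := by
          rw [Finset.mul_sum]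
          exact Finset.sum_congr rfl fun s _ => by ring
  rw [hdiff]
  exact (norm_add_le _ _).trans (add_le_add hT1 hT2)
end

section
/- Let {α_k}_{k≥0} be a nonincreasing sequence of nonnegative reals with ∑_{k=0}^∞ α_k² < ∞, and let β ∈ (0,1). Then ∑_{k=1}^∞ α_k (∑_{s=1}^k β^{k−s} α_{s−1}) < ∞ and ∑_{k=0}^∞ α_k β^k < ∞. -/
/-!
Both series have the form `∑ aₖ bₖ` with `a` and `b` square-summable, so they converge because
`2 |aₖ bₖ| ≤ aₖ² + bₖ²`. For the first one, `bₖ = ∑ₛ β^(k-s) αₛ₋₁` is the convolution of `α` with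
the geometric kernel, and the weighted Cauchy–Schwarz inequality
`bₖ² ≤ (∑ⱼ βʲ) · ∑ₛ β^(k-s) αₛ₋₁²` bounds `bₖ²` by a Cauchy product of two summable sequences.
-/

open Finset

theorem summable_mul_of_summable_sq {ι : Type*} {f g : ι → ℝ} (hf : Summable (fun i => f i ^ 2))
    (hg : Summable (fun i => g i ^ 2)) : Summable (fun i => f i * g i) :=
  Summable.of_norm_bounded ((hf.add hg).div_const 2) fun i => by
    rw [norm_mul, Real.norm_eq_abs, Real.norm_eq_abs, le_div_iff₀ two_pos, ← sq_abs (f i),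
      ← sq_abs (g i), mul_comm, ← mul_assoc]
    exact two_mul_le_add_sq _ _

theorem summable_sq_sum_antidiagonal {c g : ℕ → ℝ} (hc0 : ∀ n, 0 ≤ c n) (hc : Summable c)
    (hg : Summable (fun n => g n ^ 2)) :
    Summable (fun n => (∑ p ∈ antidiagonal n, c p.1 * g p.2) ^ 2) := by
  have hconv : Summable (fun n => ∑ p ∈ antidiagonal n, c p.1 * g p.2 ^ 2) := by
    refine (summable_norm_sum_mul_antidiagonal_of_summable_norm
      (f := c) (g := fun n => g n ^ 2) ?_ ?_).of_norm
    · simpa only [Real.norm_of_nonneg (hc0 _)] using hc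
    · simpa only [Real.norm_of_nonneg (sq_nonneg _)] using hg
  refine (hconv.mul_left (∑' n, c n)).of_nonneg_of_le (fun n => sq_nonneg _) fun n => ?_
  have hsum_c : ∑ p ∈ antidiagonal n, c p.1 ≤ ∑' n, c n := by
    rw [Nat.sum_antidiagonal_eq_sum_range_succ (fun i _ => c i)]
    exact hc.sum_le_tsum _ fun i _ => hc0 i
  calc (∑ p ∈ antidiagonal n, c p.1 * g p.2) ^ 2
      ≤ (∑ p ∈ antidiagonal n, c p.1) * ∑ p ∈ antidiagonal n, c p.1 * g p.2 ^ 2 :=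
        sum_sq_le_sum_mul_sum_of_sq_le_mul _ (fun p _ => hc0 _)
          (fun p _ => mul_nonneg (hc0 _) (sq_nonneg _)) fun p _ => (by ring : _ = _).le
    _ ≤ (∑' n, c n) * ∑ p ∈ antidiagonal n, c p.1 * g p.2 ^ 2 :=
        mul_le_mul_of_nonneg_right hsum_c (sum_nonneg fun p _ => mul_nonneg (hc0 _) (sq_nonneg _))

theorem sum_Icc_one_succ_eq_sum_antidiagonal {M : Type*} [AddCommMonoid M] (h : ℕ → ℕ → M)
    (n : ℕ) : ∑ s ∈ Icc 1 (n + 1), h (n + 1 - s) (s - 1) = ∑ p ∈ antidiagonal n, h p.1 p.2 := by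
  rw [← Nat.sum_antidiagonal_swap]
  simp only [Prod.fst_swap, Prod.snd_swap]
  rw [Nat.sum_antidiagonal_eq_sum_range_succ (fun i j => h j i)]
  refine sum_nbij' (· - 1) (· + 1) ?_ ?_ ?_ ?_ fun s hs => ?_ <;> simp_all
  rw [show n + 1 - s = n - (s - 1) by omega]

theorem stmt_5_general (α : ℕ → ℝ)
    (hsq : Summable (fun k => α k ^ 2)) (β : ℝ) (hβ0 : 0 < β) (hβ1 : β < 1) :
    Summable (fun k => α k * ∑ s ∈ Finset.Icc 1 k, β ^ (k - s) * α (s - 1)) ∧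
      Summable (fun k => α k * β ^ k) := by
  constructor
  · rw [← summable_nat_add_iff 1]
    simp only [sum_Icc_one_succ_eq_sum_antidiagonal (fun i j => β ^ i * α j)]
    exact summable_mul_of_summable_sq ((summable_nat_add_iff 1).2 hsq)
      (summable_sq_sum_antidiagonal (fun n => pow_nonneg hβ0.le n)
        (summable_geometric_of_lt_one hβ0.le hβ1) hsq)
  · refine summable_mul_of_summable_sq hsq ?_
    simpa only [pow_right_comm β 2]
      using summable_geometric_of_lt_one (sq_nonneg β) (by nlinarith)

/-- For a nonincreasing nonnegative sequence `α` with `∑ α_k² < ∞` and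
`β ∈ (0,1)`, both `∑_k α_k (∑_{s=1}^k β^(k-s) α_{s-1})` and `∑_k α_k β^k` are finite. -/
theorem stmt_5 (α : ℕ → ℝ) (hnn : ∀ k, 0 ≤ α k) (hmono : ∀ k, α (k + 1) ≤ α k)
    (hsq : Summable (fun k => α k ^ 2)) (β : ℝ) (hβ0 : 0 < β) (hβ1 : β < 1) :
    Summable (fun k => α k * ∑ s ∈ Finset.Icc 1 k, β ^ (k - s) * α (s - 1)) ∧
      Summable (fun k => α k * β ^ k) :=
  stmt_5_general α hsq β hβ0 hβ1
end

section
/- Let N ≥ 1, δ > 0, Q ≥ 1, and for each k ≥ 0 let W(k) be an N×N doubly stochastic matrix such that every positive entry of W(k) is at least δ, all diagonal entries [W(k)]_{ii} are at least δ, and for every k ≥ 0 the undirected graph on {1,…,N} whose edges are the pairs {i,j}, i ≠ j, with [W(ℓ)]_{ij} > 0 for some ℓ ∈ {k+1,…,k+Q} is connected. Define Φ(k,s) = W(k)W(k−1)⋯W(s) for 0 ≤ s ≤ k. Then: (i) lim_{k→∞} Φ(k,s) = (1/N) 𝟙𝟙ᵀ for every s ≥ 0; (ii) the convergence is geometric: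 |[Φ(k,s)]_{ij} − 1/N| ≤ θ β^{k−s} for all k ≥ s ≥ 0 and all i, j, where θ = (1 − δ/(4N²))^{−2} and β = (1 − δ/(4N²))^{1/Q}. -/
open Finset


lemma aux_walk_cross {V : Type*} (G : SimpleGraph V) (P : V → Prop) {u v : V}
    (p : G.Walk u v) (hu : P u) (hv : ¬ P v) :
    ∃ a b, G.Adj a b ∧ P a ∧ ¬ P b := by
  induction p with
  | nil => exact absurd hu hv
  | @cons a b c adj rest ih =>
    by_cases h2 : P b
    · exact ih h2 hv
    · exact ⟨a, b, adj, hu, h2⟩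

lemma aux_col_sum {N : ℕ} (W : Matrix (Fin N) (Fin N) ℝ)
    (hcol : ∀ j, ∑ i, W i j = 1) (v : Fin N → ℝ) :
    ∑ i, (W.mulVec v i)^2
      + ∑ i, ((∑ j, W i j * (v j)^2) - (W.mulVec v i)^2) = ∑ j, (v j)^2 := by
  have h1 : ∑ i : Fin N, ∑ j, W i j * (v j)^2 = ∑ j, (v j)^2 := by
    rw [Finset.sum_comm]
    simp_rw [← Finset.sum_mul, hcol, one_mul]
  rw [Finset.sum_sub_distrib]
  linarith

lemma aux_pair_id {N : ℕ} (r : Fin N → ℝ) (hr : ∑ j, r j = 1) (v : Fin N → ℝ) :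
    ∑ j, ∑ k, r j * r k * (v j - v k)^2
      = 2 * (∑ j, r j * (v j)^2) - 2 * (∑ j, r j * v j)^2 := by
  have expand : ∀ j k : Fin N, r j * r k * (v j - v k)^2
      = (r j * (v j)^2) * r k + r j * (r k * (v k)^2) - 2 * ((r j * v j) * (r k * v k)) := by
    intro j k; ring
  have h1 : ∑ j, ∑ k, r j * r k * (v j - v k)^2
      = ∑ j, ((∑ k, (r j * (v j)^2) * r k) + (∑ k, r j * (r k * (v k)^2))
          - ∑ k, 2 * ((r j * v j) * (r k * v k))) := by
    apply Finset.sum_congr rfl; intro j _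
    simp_rw [expand]
    rw [Finset.sum_sub_distrib, Finset.sum_add_distrib]
  rw [h1]
  have h2 : ∀ j : Fin N, (∑ k, (r j * (v j)^2) * r k) = r j * (v j)^2 := by
    intro j; rw [← Finset.mul_sum, hr, mul_one]
  have h3 : ∀ j : Fin N, (∑ k, r j * (r k * (v k)^2)) = r j * (∑ k, r k * (v k)^2) := by
    intro j; rw [← Finset.mul_sum]
  have h4 : ∀ j : Fin N, (∑ k, 2 * ((r j * v j) * (r k * v k)))
      = 2 * (r j * v j) * (∑ k, r k * v k) := by
    intro j; rw [← Finset.mul_sum, ← Finset.mul_sum]; ring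
  simp_rw [h2, h3, h4]
  rw [Finset.sum_sub_distrib, Finset.sum_add_distrib, ← Finset.sum_mul, ← Finset.sum_mul, hr]
  have h5 : ∑ x : Fin N, 2 * (r x * v x) = 2 * ∑ x : Fin N, r x * v x := by
    rw [Finset.mul_sum]
  rw [h5]
  ring

lemma aux_var_nonneg {N : ℕ} (r : Fin N → ℝ) (hnn : ∀ j, 0 ≤ r j) (hr : ∑ j, r j = 1)
    (v : Fin N → ℝ) : (∑ j, r j * v j)^2 ≤ ∑ j, r j * (v j)^2 := by
  have h := aux_pair_id r hr v
  have hpos : 0 ≤ ∑ j, ∑ k, r j * r k * (v j - v k)^2 := by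
    apply Finset.sum_nonneg; intro j _; apply Finset.sum_nonneg; intro k _
    have := hnn j; have := hnn k; positivity
  linarith

lemma aux_sum_sq_le_sq_sum {α : Type*} (s : Finset α) (g : α → ℝ) (hg : ∀ c ∈ s, 0 ≤ g c) :
    ∑ c ∈ s, (g c)^2 ≤ (∑ c ∈ s, g c)^2 := by
  have h : ∀ c ∈ s, (g c)^2 ≤ g c * ∑ c ∈ s, g c := by
    intro c hc
    have h1 : g c ≤ ∑ c ∈ s, g c := Finset.single_le_sum hg hc
    nlinarith [hg c hc]
  calc ∑ c ∈ s, (g c)^2 ≤ ∑ c ∈ s, g c * ∑ c ∈ s, g c := Finset.sum_le_sum h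
  _ = (∑ c ∈ s, g c)^2 := by rw [← Finset.sum_mul]; ring

set_option maxHeartbeats 2000000 in
lemma window_contract (N Q t : ℕ) (hN : 1 ≤ N) (hQ : 1 ≤ Q) (δ : ℝ) (hδ : 0 < δ) (hδ1 : δ ≤ 1)
    (W : ℕ → Matrix (Fin N) (Fin N) ℝ)
    (hWnn : ∀ k i j, 0 ≤ W k i j)
    (hWrow : ∀ k i, ∑ j, W k i j = 1) (hWcol : ∀ k j, ∑ i, W k i j = 1)
    (hpos : ∀ k i j, W k i j ≠ 0 → δ ≤ W k i j)
    (hdiag : ∀ k i, δ ≤ W k i i)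
    (hconn : (SimpleGraph.fromRel
      (fun i j => ∃ ℓ ∈ Finset.Icc (t + 1) (t + Q), 0 < W ℓ i j)).Connected)
    (x : ℕ → Fin N → ℝ)
    (hx : ∀ ℓ, t ≤ ℓ → x (ℓ + 1) = (W (ℓ + 1)).mulVec (x ℓ))
    (hmean : ∑ i, x t i = 0) :
    ∑ i, (x (t + Q) i)^2 ≤ (1 - δ / (2 * (N:ℝ)^2)) * ∑ i, (x t i)^2 := by
  classical
  have hmul : ∀ ℓ, t ≤ ℓ → ∀ i, x (ℓ+1) i = ∑ j, W (ℓ+1) i j * x ℓ j := by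
    intro ℓ hℓ i
    rw [hx ℓ hℓ]
    simp [Matrix.mulVec, dotProduct]
  have hstep : ∀ ℓ, t ≤ ℓ →
      (∑ i, (x (ℓ+1) i)^2) + ∑ i, ((∑ j, W (ℓ+1) i j * (x ℓ j)^2) - (x (ℓ+1) i)^2)
        = ∑ i, (x ℓ i)^2 := by
    intro ℓ hℓ
    have h0 := aux_col_sum (W (ℓ+1)) (hWcol (ℓ+1)) (x ℓ)
    rw [← hx ℓ hℓ] at h0
    exact h0
  have hvar_nn : ∀ ℓ, t ≤ ℓ → ∀ i,
      0 ≤ (∑ j, W (ℓ+1) i j * (x ℓ j)^2) - (x (ℓ+1) i)^2 := by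
    intro ℓ hℓ i
    have h0 := aux_var_nonneg (W (ℓ+1) i) (fun j => hWnn _ i j) (hWrow (ℓ+1) i) (x ℓ)
    rw [hmul ℓ hℓ i]
    linarith
  have hdec : ∀ ℓ, t ≤ ℓ → ∑ i, (x (ℓ+1) i)^2 ≤ ∑ i, (x ℓ i)^2 := by
    intro ℓ hℓ
    have h0 := hstep ℓ hℓ
    have h1 : 0 ≤ ∑ i, ((∑ j, W (ℓ+1) i j * (x ℓ j)^2) - (x (ℓ+1) i)^2) :=
      Finset.sum_nonneg (fun i _ => hvar_nn ℓ hℓ i)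
    linarith
  have hmono : ∀ b a, a ≤ b → ∑ i, (x (t+b) i)^2 ≤ ∑ i, (x (t+a) i)^2 := by
    intro b
    induction b with
    | zero => intro a ha; rw [Nat.le_zero.1 ha]
    | succ n ih =>
      intro a ha
      rcases Nat.lt_or_ge a (n+1) with h | h
      · have h2 : a ≤ n := by omega
        have h3 := hdec (t+n) (by omega)
        exact le_trans h3 (ih a h2)
      · have : a = n+1 := by omega
        rw [this]
  by_cases hN2 : 2 ≤ N
  case neg =>
    have hN1 : N = 1 := by omega
    subst hN1
    have hx0 : x t 0 = 0 := by simpa using hmean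
    have h1 : ∑ i, (x t i)^2 = 0 := by simp [Fin.sum_univ_one, hx0]
    have h2 := hmono Q 0 (Nat.zero_le Q)
    rw [Nat.add_zero] at h2
    rw [h1]
    rw [h1] at h2
    nlinarith [h2]
  case pos =>
  -- sorting the initial values
  let σ : Equiv.Perm (Fin N) := Tuple.sort (x t)
  have hσmono : Monotone (x t ∘ σ) := Tuple.monotone_sort (x t)
  let w : ℕ → ℝ := fun m => x t (σ ⟨min m (N-1), by omega⟩)
  have hwmono : ∀ a b : ℕ, a ≤ b → w a ≤ w b := by
    intro a b hab
    apply hσmono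
    show (⟨min a (N-1), _⟩ : Fin N) ≤ ⟨min b (N-1), _⟩
    simp only [Fin.mk_le_mk]
    omega
  let ndx : Fin N → ℕ := fun i => (σ.symm i : ℕ)
  have hndx : ∀ i, ndx i < N := fun i => (σ.symm i).2
  have hxw : ∀ i, x t i = w (ndx i) := by
    intro i
    have h1 : min (ndx i) (N-1) = ndx i := by have := hndx i; omega
    show x t i = x t (σ ⟨min (ndx i) (N-1), by omega⟩)
    have h2 : (⟨min (ndx i) (N-1), by omega⟩ : Fin N) = σ.symm i := by
      apply Fin.ext; simp [h1, ndx]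
    rw [h2, Equiv.apply_symm_apply]
  let g : ℕ → ℝ := fun c => w (c+1) - w c
  have hgdef : ∀ c, g c = w (c+1) - w c := fun _ => rfl
  have hgnn : ∀ c, 0 ≤ g c := fun c => sub_nonneg.2 (hwmono c (c+1) (Nat.le_succ c))
  let P : ℕ → Fin N → Prop := fun c i => ndx i ≤ c
  have hPdef : ∀ c i, P c i ↔ ndx i ≤ c := fun _ _ => Iff.rfl
  let Opp : ℕ → Fin N → Fin N → Prop :=
    fun c a b => (P c a ∧ ¬ P c b) ∨ (P c b ∧ ¬ P c a)
  let Cross : ℕ → ℕ → Prop := fun c ℓ => ∃ a b, Opp c a b ∧ W ℓ a b ≠ 0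
  -- existence of a crossing within the window, for each cut
  have hcrossex : ∀ c, c + 1 < N → ∃ ℓ, (t+1 ≤ ℓ ∧ ℓ ≤ t+Q) ∧ Cross c ℓ := by
    intro c hc
    have hreach := hconn.preconnected (σ ⟨c, by omega⟩) (σ ⟨c+1, hc⟩)
    obtain ⟨p⟩ := hreach
    obtain ⟨a, b, hab, hPa, hPb⟩ := aux_walk_cross _ (P c) p
      (by show ndx (σ ⟨c, by omega⟩) ≤ c
          have : σ.symm (σ ⟨c, by omega⟩) = ⟨c, by omega⟩ := Equiv.symm_apply_apply σ _
          simp [ndx, this])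
      (by show ¬ ndx (σ ⟨c+1, hc⟩) ≤ c
          have : σ.symm (σ ⟨c+1, hc⟩) = ⟨c+1, hc⟩ := Equiv.symm_apply_apply σ _
          simp [ndx, this])
    rw [SimpleGraph.fromRel_adj] at hab
    obtain ⟨hne, hr | hr⟩ := hab
    · obtain ⟨ℓ, hℓ, hWp⟩ := hr
      rw [Finset.mem_Icc] at hℓ
      exact ⟨ℓ, ⟨hℓ.1, hℓ.2⟩, a, b, Or.inl ⟨hPa, hPb⟩, ne_of_gt hWp⟩
    · obtain ⟨ℓ, hℓ, hWp⟩ := hr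
      rw [Finset.mem_Icc] at hℓ
      exact ⟨ℓ, ⟨hℓ.1, hℓ.2⟩, b, a, Or.inr ⟨hPa, hPb⟩, ne_of_gt hWp⟩
  -- first crossing time, with witnesses
  have hfirst : ∀ c : ℕ, ∃ (ℓ : ℕ) (a b : Fin N), c + 1 < N →
      ((t+1 ≤ ℓ ∧ ℓ ≤ t+Q) ∧ Opp c a b ∧ W ℓ a b ≠ 0 ∧
        ∀ ℓ', t+1 ≤ ℓ' → ℓ' < ℓ → ¬ Cross c ℓ') := by
    intro c
    by_cases hc : c + 1 < N
    · obtain ⟨ℓ0, hℓ0⟩ := hcrossex c hc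
      have hex : ∃ ℓ, ((t+1 ≤ ℓ ∧ ℓ ≤ t+Q) ∧ Cross c ℓ) := ⟨ℓ0, hℓ0⟩
      obtain ⟨⟨hb1, hb2⟩, a, b, hopp, hWab⟩ := Nat.find_spec hex
      refine ⟨Nat.find hex, a, b, fun _ => ⟨⟨hb1, hb2⟩, hopp, hWab, ?_⟩⟩
      intro ℓ' h1 h2 hcr
      exact Nat.find_min hex h2 ⟨⟨h1, by omega⟩, hcr⟩
    · exact ⟨0, ⟨0, by omega⟩, ⟨0, by omega⟩, fun h => absurd h hc⟩
  choose T A B hTAB using hfirst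
  -- the invariant: before the first crossing, the two sides stay separated
  have hinv : ∀ c, c + 1 < N → ∀ a, t + a < T c →
      ∀ i, (P c i → x (t+a) i ≤ w c) ∧ (¬ P c i → w (c+1) ≤ x (t+a) i) := by
    intro c hc a
    induction a with
    | zero =>
      intro _ i
      rw [Nat.add_zero]
      constructor
      · intro hP; rw [hxw i]; exact hwmono _ _ hP
      · intro hP
        rw [hxw i]
        exact hwmono _ _ (by have := (hPdef c i).not.1 hP; omega)
    | succ a ih =>
      intro hlt i
      have hlt' : t + a < T c := by omega
      have ihh := ih hlt'
      have hnc : ¬ Cross c (t+a+1) :=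
        (hTAB c hc).2.2.2 (t+a+1) (by omega) (by omega)
      have hxs : x (t+(a+1)) i = ∑ j, W (t+a+1) i j * x (t+a) j :=
        hmul (t+a) (by omega) i
      constructor
      · intro hPi
        rw [hxs]
        calc ∑ j, W (t+a+1) i j * x (t+a) j ≤ ∑ j, W (t+a+1) i j * w c := by
              apply Finset.sum_le_sum
              intro j _
              by_cases hPj : P c j
              · exact mul_le_mul_of_nonneg_left ((ihh j).1 hPj) (hWnn _ i j)
              · have hz : W (t+a+1) i j = 0 := by
                  by_contra hW0
                  exact hnc ⟨i, j, Or.inl ⟨hPi, hPj⟩, hW0⟩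
                rw [hz]; simp
          _ = w c := by rw [← Finset.sum_mul, hWrow]; ring
      · intro hPi
        rw [hxs]
        calc (w (c+1)) = ∑ j, W (t+a+1) i j * w (c+1) := by
              rw [← Finset.sum_mul, hWrow]; ring
          _ ≤ ∑ j, W (t+a+1) i j * x (t+a) j := by
              apply Finset.sum_le_sum
              intro j _
              by_cases hPj : P c j
              · have hz : W (t+a+1) i j = 0 := by
                  by_contra hW0
                  exact hnc ⟨i, j, Or.inr ⟨hPj, hPi⟩, hW0⟩
                rw [hz]; simp
              · exact mul_le_mul_of_nonneg_left ((ihh j).2 hPj) (hWnn _ i j)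
  -- cuts assigned to step m (time t+m+1) and row i
  let cuts : ℕ → Fin N → Finset ℕ :=
    fun m i => (Finset.range (N-1)).filter (fun c => T c = t+m+1 ∧ A c = i)
  have hcmem : ∀ m i c, c ∈ cuts m i → c + 1 < N ∧ T c = t+m+1 ∧ A c = i := by
    intro m i c hcm
    have h1 := Finset.mem_filter.1 hcm
    have h2 := Finset.mem_range.1 h1.1
    exact ⟨by omega, h1.2.1, h1.2.2⟩
  -- telescoping sums of gaps
  have htel : ∀ n a : ℕ, ∑ c ∈ Finset.Icc a (a+n), g c = w (a+n+1) - w a := by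
    intro n
    induction n with
    | zero => intro a; simp [hgdef]
    | succ n ih =>
      intro a
      rw [show a + (n+1) = (a+n)+1 from rfl,
        Finset.sum_Icc_succ_top (by omega : a ≤ a+n+1), ih a, hgdef]
      ring
  -- KEY1 : the gap bound per pair (j,k)
  have hkey1 : ∀ m, m < Q → ∀ i j k,
      ∑ c ∈ (cuts m i).filter (fun c => Opp c j k), (g c)^2
        ≤ (x (t+m) j - x (t+m) k)^2 := by
    intro m hm i j k
    rcases Finset.eq_empty_or_nonempty ((cuts m i).filter (fun c => Opp c j k))
      with hFe | hFne
    · rw [hFe]; simp; positivity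
    have hOppF : ∀ c ∈ (cuts m i).filter (fun c => Opp c j k), Opp c j k :=
      fun c hc => (Finset.mem_filter.1 hc).2
    have hinvF : ∀ c ∈ (cuts m i).filter (fun c => Opp c j k), c + 1 < N ∧
        (∀ i', (P c i' → x (t+m) i' ≤ w c) ∧ (¬ P c i' → w (c+1) ≤ x (t+m) i')) := by
      intro c hcF
      obtain ⟨hc, hT, _⟩ := hcmem m i c (Finset.mem_filter.1 hcF).1
      exact ⟨hc, hinv c hc m (by omega)⟩
    have ordered : ∀ j' k' : Fin N, ndx j' < ndx k' →
        (∀ c ∈ (cuts m i).filter (fun c => Opp c j k), Opp c j' k') →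
        ∑ c ∈ (cuts m i).filter (fun c => Opp c j k), (g c)^2
          ≤ (x (t+m) k' - x (t+m) j')^2 := by
      intro j' k' hjk hOpp
      set F := (cuts m i).filter (fun c => Opp c j k) with hF
      have hcbound : ∀ c ∈ F, ndx j' ≤ c ∧ c < ndx k' := by
        intro c hcF
        rcases hOpp c hcF with ⟨h1, h2⟩ | ⟨h1, h2⟩
        · have h2' := (hPdef c k').not.1 h2
          exact ⟨(hPdef c j').1 h1, by omega⟩
        · have h1' := (hPdef c k').1 h1
          have h2' := (hPdef c j').not.1 h2
          omega
      have hbj : ∀ c ∈ F, x (t+m) j' ≤ w c := by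
        intro c hcF
        exact ((hinvF c hcF).2 j').1 ((hPdef c j').2 (hcbound c hcF).1)
      have hbk : ∀ c ∈ F, w (c+1) ≤ x (t+m) k' := by
        intro c hcF
        refine ((hinvF c hcF).2 k').2 ((hPdef c k').not.2 ?_)
        have := (hcbound c hcF).2; omega
      have hcmin := F.min'_mem hFne
      have hcmax := F.max'_mem hFne
      have hminmax : F.min' hFne ≤ F.max' hFne := F.min'_le _ hcmax
      have hsub : F ⊆ Finset.Icc (F.min' hFne) (F.max' hFne) :=
        fun c hc => Finset.mem_Icc.2 ⟨F.min'_le c hc, F.le_max' c hc⟩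
      have hsum1 : ∑ c ∈ F, g c ≤ ∑ c ∈ Finset.Icc (F.min' hFne) (F.max' hFne), g c :=
        Finset.sum_le_sum_of_subset_of_nonneg hsub (fun c _ _ => hgnn c)
      have htel' : ∑ c ∈ Finset.Icc (F.min' hFne) (F.max' hFne), g c
          = w (F.max' hFne + 1) - w (F.min' hFne) := by
        have := htel (F.max' hFne - F.min' hFne) (F.min' hFne)
        rw [show F.min' hFne + (F.max' hFne - F.min' hFne) = F.max' hFne from by omega] at this
        exact this
      have h2 : w (F.max' hFne + 1) ≤ x (t+m) k' := hbk _ hcmax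
      have h3 : x (t+m) j' ≤ w (F.min' hFne) := hbj _ hcmin
      have h4 : ∑ c ∈ F, g c ≤ x (t+m) k' - x (t+m) j' := by
        rw [htel'] at hsum1; linarith
      have h5 : ∑ c ∈ F, (g c)^2 ≤ (∑ c ∈ F, g c)^2 :=
        aux_sum_sq_le_sq_sum F g (fun c _ => hgnn c)
      have h6 : 0 ≤ ∑ c ∈ F, g c := Finset.sum_nonneg (fun c _ => hgnn c)
      nlinarith
    rcases lt_trichotomy (ndx j) (ndx k) with hjk | hjk | hjk
    · have := ordered j k hjk hOppF
      nlinarith [this]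
    · obtain ⟨c, hcF⟩ := hFne
      rcases hOppF c hcF with ⟨h1, h2⟩ | ⟨h1, h2⟩
      · exact absurd ((hPdef c j).1 h1) (by have := (hPdef c k).not.1 h2; omega)
      · exact absurd ((hPdef c k).1 h1) (by have := (hPdef c j).not.1 h2; omega)
    · have := ordered k j hjk (fun c hc => (hOppF c hc).symm)
      nlinarith [this]
  -- KEY2 : per-step variance lower bound from the assigned cuts
  have hkey2 : ∀ m, m < Q → ∀ i,
      δ * ∑ c ∈ cuts m i, (g c)^2
        ≤ 2 * ((∑ j, W (t+m+1) i j * (x (t+m) j)^2) - (x (t+m+1) i)^2) := by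
    intro m hm i
    set y := x (t+m) with hy
    have hrow := hWrow (t+m+1) i
    have hpair := aux_pair_id (W (t+m+1) i) hrow y
    have hx1 : x (t+m+1) i = ∑ j, W (t+m+1) i j * y j := hmul (t+m) (by omega) i
    -- p and q : mass on each side of cut c
    let p : ℕ → ℝ := fun c => ∑ j, if P c j then W (t+m+1) i j else 0
    let q : ℕ → ℝ := fun c => ∑ j, if P c j then 0 else W (t+m+1) i j
    have hpq1 : ∀ c, p c + q c = 1 := by
      intro c
      rw [show p c + q c = ∑ j, ((if P c j then W (t+m+1) i j else 0)
        + (if P c j then 0 else W (t+m+1) i j)) from (Finset.sum_add_distrib).symm]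
      rw [← hrow]
      apply Finset.sum_congr rfl
      intro j _
      by_cases h : P c j <;> simp [h]
    -- reorganization
    have hper : ∀ c, (∑ j, ∑ k, W (t+m+1) i j * W (t+m+1) i k
          * (if Opp c j k then (g c)^2 else 0)) = (g c)^2 * (2 * (p c * q c)) := by
      intro c
      have e : ∀ j k : Fin N, W (t+m+1) i j * W (t+m+1) i k * (if Opp c j k then (g c)^2 else 0)
          = (if P c j then W (t+m+1) i j else 0) * (if P c k then 0 else W (t+m+1) i k) * (g c)^2
            + (if P c j then 0 else W (t+m+1) i j) * (if P c k then W (t+m+1) i k else 0) * (g c)^2 := by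
        intro j k
        by_cases h1 : P c j <;> by_cases h2 : P c k <;>
          simp only [Opp, h1, h2, if_true, if_false, true_and, false_and, and_true, and_false,
            not_true, not_false_iff, or_self, if_neg, if_pos, or_false, false_or] <;>
          first
            | ring
            | (rw [if_neg (by tauto)]; ring)
            | (rw [if_pos (by tauto)]; ring)
      simp_rw [e]
      simp_rw [Finset.sum_add_distrib]
      have f1 : (∑ j, ∑ k, (if P c j then W (t+m+1) i j else 0)
            * (if P c k then 0 else W (t+m+1) i k) * (g c)^2) = p c * q c * (g c)^2 := by
        simp_rw [← Finset.sum_mul]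
        rw [← Finset.sum_mul_sum]
      have f2 : (∑ j, ∑ k, (if P c j then 0 else W (t+m+1) i j)
            * (if P c k then W (t+m+1) i k else 0) * (g c)^2) = q c * p c * (g c)^2 := by
        simp_rw [← Finset.sum_mul]
        rw [← Finset.sum_mul_sum]
      rw [f1, f2]
      ring
    -- each assigned cut has at least δ mass on each side
    have hpq2 : ∀ c ∈ cuts m i, δ ≤ 2 * (p c * q c) := by
      intro c hcm
      obtain ⟨hc, hT, hA⟩ := hcmem m i c hcm
      have H := hTAB c hc
      have hopp : Opp c (A c) (B c) := H.2.1
      have hW0 : W (t+m+1) (A c) (B c) ≠ 0 := by rw [← hT]; exact H.2.2.1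
      have hWB : δ ≤ W (t+m+1) i (B c) := by rw [← hA]; exact hpos _ _ _ hW0
      have hWii : δ ≤ W (t+m+1) i i := hdiag _ i
      have hnn1 : ∀ j : Fin N, j ∈ Finset.univ → 0 ≤ if P c j then W (t+m+1) i j else 0 := by
        intro j _; by_cases h : P c j <;> simp [h, hWnn]
      have hnn2 : ∀ j : Fin N, j ∈ Finset.univ → 0 ≤ if P c j then 0 else W (t+m+1) i j := by
        intro j _; by_cases h : P c j <;> simp [h, hWnn]
      have hp : δ ≤ p c ∧ δ ≤ q c := by
        rcases hopp with ⟨h1, h2⟩ | ⟨h1, h2⟩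
        · rw [hA] at h1
          constructor
          · refine le_trans ?_ (Finset.single_le_sum hnn1 (Finset.mem_univ i))
            rw [if_pos h1]; exact hWii
          · refine le_trans ?_ (Finset.single_le_sum hnn2 (Finset.mem_univ (B c)))
            rw [if_neg h2]; exact hWB
        · rw [hA] at h2
          constructor
          · refine le_trans ?_ (Finset.single_le_sum hnn1 (Finset.mem_univ (B c)))
            rw [if_pos h1]; exact hWB
          · refine le_trans ?_ (Finset.single_le_sum hnn2 (Finset.mem_univ i))
            rw [if_neg h2]; exact hWii
      have h1 := hpq1 c
      nlinarith [hp.1, hp.2]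
    -- combine : 2 * Var ≥ Σ_c∈cuts δ g²
    have hchain : ∑ c ∈ cuts m i, δ * (g c)^2
        ≤ ∑ j, ∑ k, W (t+m+1) i j * W (t+m+1) i k * (y j - y k)^2 := by
      have s1 : ∀ j k : Fin N, W (t+m+1) i j * W (t+m+1) i k
            * (∑ c ∈ (cuts m i).filter (fun c => Opp c j k), (g c)^2)
          ≤ W (t+m+1) i j * W (t+m+1) i k * (y j - y k)^2 := by
        intro j k
        exact mul_le_mul_of_nonneg_left (hkey1 m hm i j k)
          (mul_nonneg (hWnn _ i j) (hWnn _ i k))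
      have s2 : ∑ j, ∑ k, W (t+m+1) i j * W (t+m+1) i k
            * (∑ c ∈ (cuts m i).filter (fun c => Opp c j k), (g c)^2)
          ≤ ∑ j, ∑ k, W (t+m+1) i j * W (t+m+1) i k * (y j - y k)^2 :=
        Finset.sum_le_sum (fun j _ => Finset.sum_le_sum (fun k _ => s1 j k))
      have s3 : ∀ j k : Fin N, W (t+m+1) i j * W (t+m+1) i k
            * (∑ c ∈ (cuts m i).filter (fun c => Opp c j k), (g c)^2)
          = ∑ c ∈ cuts m i, W (t+m+1) i j * W (t+m+1) i k
            * (if Opp c j k then (g c)^2 else 0) := by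
        intro j k
        rw [Finset.sum_filter, Finset.mul_sum]
      calc ∑ c ∈ cuts m i, δ * (g c)^2
          ≤ ∑ c ∈ cuts m i, (g c)^2 * (2 * (p c * q c)) := by
            apply Finset.sum_le_sum
            intro c hc
            have := hpq2 c hc
            nlinarith [sq_nonneg (g c)]
        _ = ∑ c ∈ cuts m i, ∑ j, ∑ k, W (t+m+1) i j * W (t+m+1) i k
              * (if Opp c j k then (g c)^2 else 0) :=
            Finset.sum_congr rfl (fun c _ => (hper c).symm)
        _ = ∑ j, ∑ k, ∑ c ∈ cuts m i, W (t+m+1) i j * W (t+m+1) i k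
              * (if Opp c j k then (g c)^2 else 0) := by
            rw [Finset.sum_comm]
            exact Finset.sum_congr rfl (fun j _ => Finset.sum_comm)
        _ = ∑ j, ∑ k, W (t+m+1) i j * W (t+m+1) i k
              * (∑ c ∈ (cuts m i).filter (fun c => Opp c j k), (g c)^2) :=
            Finset.sum_congr rfl (fun j _ => Finset.sum_congr rfl (fun k _ => (s3 j k).symm))
        _ ≤ _ := s2
    have hms : ∑ c ∈ cuts m i, δ * (g c)^2 = δ * ∑ c ∈ cuts m i, (g c)^2 :=
      (Finset.mul_sum _ _ _).symm
    rw [hx1]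
    linarith [hchain, hpair, hms.symm.le, hms.le]
  -- summing the dissipation over the window : fiberwise sum over the cuts
  have hcuts_def : ∀ m i, cuts m i = (Finset.range (N-1)).filter
      (fun c => T c = t+m+1 ∧ A c = i) := fun _ _ => rfl
  have hfiber : ∑ m ∈ Finset.range Q, ∑ i : Fin N, ∑ c ∈ cuts m i, (g c)^2
      = ∑ c ∈ Finset.range (N-1), (g c)^2 := by
    have hset : ∀ m i, cuts m i = (Finset.range (N-1)).filter
        (fun c => (T c - (t+1), A c) = (m, i)) := by
      intro m i
      rw [hcuts_def]
      apply Finset.ext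
      intro c
      simp only [Finset.mem_filter, Finset.mem_range, Prod.mk.injEq]
      constructor
      · rintro ⟨hc, h1, h2⟩
        exact ⟨hc, by omega, h2⟩
      · rintro ⟨hc, h1, h2⟩
        have := (hTAB c (by omega)).1.1
        exact ⟨hc, by omega, h2⟩
    have hmaps : ∀ c ∈ Finset.range (N-1),
        (T c - (t+1), A c) ∈ (Finset.range Q) ×ˢ (Finset.univ : Finset (Fin N)) := by
      intro c hc
      have hc' := Finset.mem_range.1 hc
      have h1 := (hTAB c (by omega)).1.1
      have h2 := (hTAB c (by omega)).1.2
      rw [Finset.mem_product, Finset.mem_range]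
      exact ⟨by omega, Finset.mem_univ _⟩
    have hfib := Finset.sum_fiberwise_of_maps_to hmaps (fun c => (g c)^2)
    calc ∑ m ∈ Finset.range Q, ∑ i : Fin N, ∑ c ∈ cuts m i, (g c)^2
        = ∑ p ∈ (Finset.range Q) ×ˢ (Finset.univ : Finset (Fin N)),
            ∑ c ∈ (Finset.range (N-1)).filter (fun c => (T c - (t+1), A c) = p), (g c)^2 := by
          rw [Finset.sum_product]
          exact Finset.sum_congr rfl (fun m _ => Finset.sum_congr rfl
            (fun i _ => by rw [← hset m i]))
      _ = ∑ c ∈ Finset.range (N-1), (g c)^2 := hfib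
  have htl : ∑ m ∈ Finset.range Q,
      ((∑ i, (x (t+m) i)^2) - (∑ i, (x (t+m+1) i)^2))
        = (∑ i, (x t i)^2) - ∑ i, (x (t+Q) i)^2 := by
    exact Finset.sum_range_sub' (fun m => ∑ i, (x (t+m) i)^2) Q
  have hterm : ∀ m ∈ Finset.range Q, δ/2 * (∑ i : Fin N, ∑ c ∈ cuts m i, (g c)^2)
      ≤ (∑ i, (x (t+m) i)^2) - (∑ i, (x (t+m+1) i)^2) := by
    intro m hm
    have hm' := Finset.mem_range.1 hm
    have hstep' := hstep (t+m) (by omega)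
    have h1 : ∑ i : Fin N, δ/2 * (∑ c ∈ cuts m i, (g c)^2)
        ≤ ∑ i : Fin N, ((∑ j, W (t+m+1) i j * (x (t+m) j)^2) - (x (t+m+1) i)^2) := by
      apply Finset.sum_le_sum
      intro i _
      have := hkey2 m hm' i
      linarith
    rw [← Finset.mul_sum] at h1
    linarith [hstep', h1]
  have hdiss : δ/2 * ∑ c ∈ Finset.range (N-1), (g c)^2
      ≤ (∑ i, (x t i)^2) - ∑ i, (x (t+Q) i)^2 := by
    calc δ/2 * ∑ c ∈ Finset.range (N-1), (g c)^2
        = δ/2 * ∑ m ∈ Finset.range Q, ∑ i : Fin N, ∑ c ∈ cuts m i, (g c)^2 := by rw [hfiber]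
      _ = ∑ m ∈ Finset.range Q, δ/2 * (∑ i : Fin N, ∑ c ∈ cuts m i, (g c)^2) := by
          rw [Finset.mul_sum]
      _ ≤ ∑ m ∈ Finset.range Q,
            ((∑ i, (x (t+m) i)^2) - (∑ i, (x (t+m+1) i)^2)) := Finset.sum_le_sum hterm
      _ = _ := htl
  -- spread bounds
  have hsp : ∑ c ∈ Finset.range (N-1), g c = w (N-1) - w 0 :=
    Finset.sum_range_sub w (N-1)
  have hCS : (∑ c ∈ Finset.range (N-1), g c)^2
      ≤ ((N:ℝ) - 1) * ∑ c ∈ Finset.range (N-1), (g c)^2 := by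
    have h := Finset.sum_mul_sq_le_sq_mul_sq (Finset.range (N-1)) (fun _ => (1:ℝ)) g
    simp only [one_mul, one_pow, Finset.sum_const, Finset.card_range, nsmul_eq_mul,
      mul_one] at h
    have hc : ((N-1 : ℕ) : ℝ) = (N:ℝ) - 1 := by
      rw [Nat.cast_sub hN, Nat.cast_one]
    rw [hc] at h
    exact h
  have hVw : 4 * (∑ i, (x t i)^2) ≤ (N:ℝ) * (w (N-1) - w 0)^2 := by
    have hub : ∀ i, x t i ≤ w (N-1) := fun i => by
      rw [hxw i]; exact hwmono _ _ (by have := hndx i; omega)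
    have hlb : ∀ i, w 0 ≤ x t i := fun i => by
      rw [hxw i]; exact hwmono _ _ (Nat.zero_le _)
    have h1 : ∑ i, (x t i)^2 ≤ ∑ i, ((w 0 + w (N-1)) * x t i - w 0 * w (N-1)) := by
      apply Finset.sum_le_sum
      intro i _
      nlinarith [hub i, hlb i]
    have h2 : ∑ i : Fin N, ((w 0 + w (N-1)) * x t i - w 0 * w (N-1))
        = - ((N:ℝ) * (w 0 * w (N-1))) := by
      rw [Finset.sum_sub_distrib, ← Finset.mul_sum, hmean, Finset.sum_const,
        Finset.card_univ, Fintype.card_fin, nsmul_eq_mul]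
      ring
    have h3 : 0 ≤ (N:ℝ) := Nat.cast_nonneg N
    nlinarith [h1, h2, mul_nonneg h3 (sq_nonneg (w 0 + w (N-1)))]
  -- final chain
  have hG : 0 ≤ ∑ c ∈ Finset.range (N-1), (g c)^2 :=
    Finset.sum_nonneg (fun c _ => sq_nonneg _)
  have hNR : (2:ℝ) ≤ (N:ℝ) := by exact_mod_cast hN2
  have hVt4 : 4 * (∑ i, (x t i)^2) ≤ (N:ℝ)^2 * ∑ c ∈ Finset.range (N-1), (g c)^2 := by
    rw [← hsp] at hVw
    have e2 : (N:ℝ) * (∑ c ∈ Finset.range (N-1), g c)^2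
        ≤ (N:ℝ) * (((N:ℝ) - 1) * ∑ c ∈ Finset.range (N-1), (g c)^2) :=
      mul_le_mul_of_nonneg_left hCS (Nat.cast_nonneg N)
    have e3 : (N:ℝ) * (((N:ℝ) - 1) * ∑ c ∈ Finset.range (N-1), (g c)^2)
        ≤ (N:ℝ)^2 * ∑ c ∈ Finset.range (N-1), (g c)^2 := by
      have e3' : (N:ℝ) * (((N:ℝ) - 1) * ∑ c ∈ Finset.range (N-1), (g c)^2)
          = (N:ℝ)^2 * (∑ c ∈ Finset.range (N-1), (g c)^2)
            - (N:ℝ) * ∑ c ∈ Finset.range (N-1), (g c)^2 := by ring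
      have e3'' : 0 ≤ (N:ℝ) * ∑ c ∈ Finset.range (N-1), (g c)^2 :=
        mul_nonneg (Nat.cast_nonneg N) hG
      linarith
    linarith [hVw, e2, e3]
  have hfin : δ/(2*(N:ℝ)^2) * (∑ i, (x t i)^2)
      ≤ δ/2 * ∑ c ∈ Finset.range (N-1), (g c)^2 := by
    rw [div_mul_eq_mul_div, div_le_iff₀ (by positivity)]
    have e4 := mul_le_mul_of_nonneg_left hVt4 hδ.le
    have e5 : 0 ≤ δ * ∑ c ∈ Finset.range (N-1), (g c)^2 := mul_nonneg hδ.le hG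
    nlinarith [e4, e5]
  rw [sub_mul, one_mul]
  linarith [hdiss, hfin]



set_option maxHeartbeats 2000000 in
/-- For doubly stochastic matrices `W(k)` whose positive entries (and diagonal
entries) are at least `δ`, and whose union graphs over windows of length `Q` are connected,
the transition products `Φ(k,s) = W(k)⋯W(s)` converge to `(1/N)𝟙𝟙ᵀ`, geometrically:
`|[Φ(k,s)]_{ij} − 1/N| ≤ θ β^(k−s)` with `θ = (1 − δ/(4N²))⁻²` and `β = (1 − δ/(4N²))^(1/Q)`. -/
theorem stmt_7 (N Q : ℕ) (hN : 1 ≤ N) (hQ : 1 ≤ Q) (δ : ℝ) (hδ : 0 < δ)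
    (W : ℕ → Matrix (Fin N) (Fin N) ℝ)
    (hWnn : ∀ k i j, 0 ≤ W k i j)
    (hWrow : ∀ k i, ∑ j, W k i j = 1) (hWcol : ∀ k j, ∑ i, W k i j = 1)
    (hpos : ∀ k i j, W k i j ≠ 0 → δ ≤ W k i j)
    (hdiag : ∀ k i, δ ≤ W k i i)
    (hconn : ∀ k, (SimpleGraph.fromRel
      (fun i j => ∃ ℓ ∈ Finset.Icc (k + 1) (k + Q), 0 < W ℓ i j)).Connected)
    (Φ : ℕ → ℕ → Matrix (Fin N) (Fin N) ℝ)
    (hΦd : ∀ k, Φ k k = W k)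
    (hΦr : ∀ k s, s ≤ k → Φ (k + 1) s = W (k + 1) * Φ k s) :
    (∀ s, Filter.Tendsto (fun k => Φ k s) Filter.atTop
      (nhds (Matrix.of fun _ _ => (N : ℝ)⁻¹))) ∧
    (∀ s k, s ≤ k → ∀ i j, |Φ k s i j - (N : ℝ)⁻¹| ≤
      (1 - δ / (4 * (N : ℝ) ^ 2))⁻¹ ^ 2 *
        ((1 - δ / (4 * (N : ℝ) ^ 2)) ^ ((1 : ℝ) / Q)) ^ (k - s)) := by
  classical
  have hNR : (1:ℝ) ≤ (N:ℝ) := by exact_mod_cast hN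
  have hNne : (N:ℝ) ≠ 0 := by positivity
  have hQR : (1:ℝ) ≤ (Q:ℝ) := by exact_mod_cast hQ
  have hδ1 : δ ≤ 1 := by
    have h0 := hdiag 0 ⟨0, by omega⟩
    have h1 := hWrow 0 ⟨0, by omega⟩
    have h2 : W 0 ⟨0, by omega⟩ ⟨0, by omega⟩ ≤ 1 := by
      rw [← h1]
      exact Finset.single_le_sum (fun j _ => hWnn 0 _ j) (Finset.mem_univ _)
    linarith
  set γ : ℝ := δ / (4 * (N:ℝ)^2) with hγ
  have hγpos : 0 < γ := by rw [hγ]; positivity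
  have hγle : γ ≤ 1/4 := by
    rw [hγ, div_le_iff₀ (by positivity)]
    nlinarith
  have hbase : 0 < 1 - γ := by linarith
  have hbase1 : 1 - γ < 1 := by linarith
  set ρ : ℝ := 1 - δ / (2 * (N:ℝ)^2) with hρ
  have h2γ : δ / (2 * (N:ℝ)^2) = 2 * γ := by rw [hγ]; field_simp; ring
  have hρnn : 0 ≤ ρ := by
    rw [hρ, h2γ]; linarith
  have hρle : ρ ≤ (1 - γ)^2 := by
    rw [hρ, h2γ]; nlinarith [sq_nonneg γ]
  -- column sums of Φ are 1
  have hΦcol : ∀ s k, s ≤ k → ∀ j, ∑ i, Φ k s i j = 1 := by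
    intro s k hsk
    induction k, hsk using Nat.le_induction with
    | base => intro j; rw [hΦd]; exact hWcol s j
    | succ k hsk ih =>
      intro j
      rw [hΦr k s hsk]
      simp_rw [Matrix.mul_apply]
      rw [Finset.sum_comm]
      calc ∑ m, ∑ i, W (k+1) i m * Φ k s m j
          = ∑ m, (∑ i, W (k+1) i m) * Φ k s m j := by
            exact Finset.sum_congr rfl (fun m _ => (Finset.sum_mul _ _ _).symm)
        _ = ∑ m, Φ k s m j := by
            exact Finset.sum_congr rfl (fun m _ => by rw [hWcol, one_mul])
        _ = 1 := ih j
  -- the main quantitative estimate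
  have main : ∀ s k, s ≤ k → ∀ i j,
      |Φ k s i j - (N:ℝ)⁻¹| ≤ (1 - γ)^((k - s)/Q) := by
    intro s k hsk i j
    set z : ℕ → Fin N → ℝ := fun k i => Φ (max k s) s i j - (N:ℝ)⁻¹ with hz
    have hzval : ∀ k, s ≤ k → ∀ i, z k i = Φ k s i j - (N:ℝ)⁻¹ := by
      intro k hk i
      rw [hz]
      simp [max_eq_left hk]
    have hzstep : ∀ ℓ, s ≤ ℓ → z (ℓ+1) = (W (ℓ+1)).mulVec (z ℓ) := by
      intro ℓ hℓ
      funext i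
      rw [hzval (ℓ+1) (by omega) i]
      have h1 : Φ (ℓ+1) s i j = ∑ m, W (ℓ+1) i m * Φ ℓ s m j := by
        rw [hΦr ℓ s hℓ, Matrix.mul_apply]
      have h2 : (W (ℓ+1)).mulVec (z ℓ) i = ∑ m, W (ℓ+1) i m * (Φ ℓ s m j - (N:ℝ)⁻¹) := by
        simp only [Matrix.mulVec, dotProduct]
        exact Finset.sum_congr rfl (fun m _ => by rw [hzval ℓ hℓ m])
      rw [h1, h2]
      simp_rw [mul_sub]
      rw [Finset.sum_sub_distrib, ← Finset.sum_mul, hWrow, one_mul]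
    have hmean : ∀ k, s ≤ k → ∑ i, z k i = 0 := by
      intro k hk
      calc ∑ i, z k i = ∑ i, (Φ k s i j - (N:ℝ)⁻¹) :=
            Finset.sum_congr rfl (fun i _ => hzval k hk i)
        _ = (∑ i, Φ k s i j) - (N:ℝ) * (N:ℝ)⁻¹ := by
            rw [Finset.sum_sub_distrib, Finset.sum_const, Finset.card_univ,
              Fintype.card_fin, nsmul_eq_mul]
        _ = 0 := by rw [hΦcol s k hk j, mul_inv_cancel₀ hNne]; ring
    -- initial bound
    have hVs : ∑ i, (z s i)^2 ≤ 1 := by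
      have ha1 : ∀ i, W s i j ≤ 1 := fun i => by
        rw [← hWcol s j]
        exact Finset.single_le_sum (fun i' _ => hWnn s i' j) (Finset.mem_univ i)
      have ha2 : ∑ i, (W s i j)^2 ≤ 1 := by
        calc ∑ i, (W s i j)^2 ≤ ∑ i, W s i j := by
              apply Finset.sum_le_sum
              intro i _
              nlinarith [hWnn s i j, ha1 i]
          _ = 1 := hWcol s j
      have hc1 : (N:ℝ) * (N:ℝ)⁻¹^2 = (N:ℝ)⁻¹ := by
        field_simp
      calc ∑ i, (z s i)^2
          = ∑ i, ((W s i j)^2 - 2*(N:ℝ)⁻¹*(W s i j) + (N:ℝ)⁻¹^2) := by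
            apply Finset.sum_congr rfl
            intro i _
            rw [hzval s le_rfl i, hΦd]
            ring
        _ = (∑ i, (W s i j)^2) - 2*(N:ℝ)⁻¹*(∑ i, W s i j) + (N:ℝ)*(N:ℝ)⁻¹^2 := by
            rw [Finset.sum_add_distrib, Finset.sum_sub_distrib, ← Finset.mul_sum,
              Finset.sum_const, Finset.card_univ, Fintype.card_fin, nsmul_eq_mul]
        _ ≤ 1 := by
            rw [hWcol s j, hc1]
            have : 0 ≤ (N:ℝ)⁻¹ := by positivity
            linarith [ha2]
    -- per-step decrease
    have hdec : ∀ ℓ, s ≤ ℓ → ∑ i, (z (ℓ+1) i)^2 ≤ ∑ i, (z ℓ i)^2 := by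
      intro ℓ hℓ
      have h0 := aux_col_sum (W (ℓ+1)) (hWcol (ℓ+1)) (z ℓ)
      rw [← hzstep ℓ hℓ] at h0
      have h1 : 0 ≤ ∑ i, ((∑ m, W (ℓ+1) i m * (z ℓ m)^2) - (z (ℓ+1) i)^2) := by
        apply Finset.sum_nonneg
        intro i _
        have h2 := aux_var_nonneg (W (ℓ+1) i) (fun m => hWnn _ i m) (hWrow (ℓ+1) i) (z ℓ)
        have h3 : z (ℓ+1) i = ∑ m, W (ℓ+1) i m * z ℓ m := by
          rw [hzstep ℓ hℓ]
          simp [Matrix.mulVec, dotProduct]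
        rw [h3]
        linarith
      linarith
    have hVmono : ∀ b a, a ≤ b → ∑ i, (z (s+b) i)^2 ≤ ∑ i, (z (s+a) i)^2 := by
      intro b
      induction b with
      | zero => intro a ha; rw [Nat.le_zero.1 ha]
      | succ n ih =>
        intro a ha
        rcases Nat.lt_or_ge a (n+1) with h | h
        · exact le_trans (hdec (s+n) (by omega)) (ih a (by omega))
        · have : a = n+1 := by omega
          rw [this]
    -- window contraction iterated
    have hwin : ∀ tt, s ≤ tt → ∑ i, (z (tt+Q) i)^2 ≤ ρ * ∑ i, (z tt i)^2 := by
      intro tt htt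
      rw [hρ]
      exact window_contract N Q tt hN hQ δ hδ hδ1 W hWnn hWrow hWcol hpos hdiag
        (hconn tt) z (fun ℓ hℓ => hzstep ℓ (le_trans htt hℓ)) (hmean tt htt)
    have hiter : ∀ a, ∑ i, (z (s+a) i)^2 ≤ ρ^(a/Q) := by
      intro a
      induction a using Nat.strong_induction_on with
      | _ a ih =>
        by_cases ha : a < Q
        · rw [Nat.div_eq_of_lt ha, pow_zero]
          have := hVmono a 0 (Nat.zero_le a)
          rw [Nat.add_zero] at this
          exact le_trans this hVs
        · have haQ : Q ≤ a := by omega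
          have h1 : s + (a - Q) + Q = s + a := by omega
          have h2 := hwin (s + (a-Q)) (by omega)
          rw [h1] at h2
          have h3 := ih (a - Q) (by omega)
          have h4 : a / Q = (a - Q)/Q + 1 := Nat.div_eq_sub_div (by omega) haQ
          rw [h4, pow_succ]
          calc ∑ i, (z (s+a) i)^2 ≤ ρ * ∑ i, (z (s+(a-Q)) i)^2 := h2
            _ ≤ ρ * ρ^((a-Q)/Q) := mul_le_mul_of_nonneg_left h3 hρnn
            _ = ρ^((a-Q)/Q) * ρ := mul_comm _ _
    -- conclude
    have hk : k = s + (k - s) := by omega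
    have hVk : ∑ i, (z k i)^2 ≤ ρ^((k-s)/Q) := by
      rw [hk]
      have := hiter (k - s)
      simpa using this
    have hsingle : (z k i)^2 ≤ ∑ i', (z k i')^2 := by
      have := Finset.single_le_sum (f := fun i' => (z k i')^2)
        (fun i' _ => sq_nonneg _) (Finset.mem_univ i)
      simpa using this
    have hpow : ρ^((k-s)/Q) ≤ ((1-γ)^((k-s)/Q))^2 := by
      rw [← pow_mul, mul_comm ((k-s)/Q) 2, pow_mul]
      exact pow_le_pow_left₀ hρnn hρle _
    have hb : 0 ≤ (1-γ)^((k-s)/Q) := pow_nonneg hbase.le _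
    have habs : (z k i)^2 ≤ ((1-γ)^((k-s)/Q))^2 :=
      le_trans (le_trans hsingle hVk) hpow
    rw [← hzval k hsk i]
    rw [abs_le]
    constructor <;> nlinarith [habs, hb]
  -- part (ii) in the required form
  have part2 : ∀ s k, s ≤ k → ∀ i j, |Φ k s i j - (N : ℝ)⁻¹| ≤
      (1 - γ)⁻¹ ^ 2 * ((1 - γ) ^ ((1 : ℝ) / Q)) ^ (k - s) := by
    intro s k hsk i j
    refine le_trans (main s k hsk i j) ?_
    have hQne : (Q:ℝ) ≠ 0 := by positivity
    set n := k - s with hn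
    set m := n / Q with hm
    -- rewrite RHS as a single rpow
    have hr1 : ((1 - γ) ^ ((1 : ℝ) / Q)) ^ n = (1 - γ) ^ (((1:ℝ)/Q) * n) := by
      rw [← Real.rpow_natCast ((1 - γ) ^ ((1 : ℝ) / Q)) n, ← Real.rpow_mul hbase.le]
    have hr2 : (1 - γ)⁻¹ ^ 2 = (1 - γ) ^ ((-2):ℝ) := by
      rw [Real.rpow_neg hbase.le]
      rw [show ((2:ℝ)) = ((2:ℕ):ℝ) by norm_num, Real.rpow_natCast, inv_pow]
    rw [hr1, hr2, ← Real.rpow_add hbase]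
    have hr3 : (1 - γ) ^ m = (1 - γ) ^ ((m:ℕ):ℝ) := (Real.rpow_natCast _ m).symm
    rw [hr3]
    apply Real.rpow_le_rpow_of_exponent_ge hbase hbase1.le
    -- -2 + (1/Q) * n ≤ m
    have hdm' : Q * m + n % Q = n := by rw [hm]; exact Nat.div_add_mod n Q
    have hmod := Nat.mod_lt n (show 0 < Q by omega)
    have hmodR : ((n % Q : ℕ):ℝ) < (Q:ℝ) := by exact_mod_cast hmod
    have hdmR : (Q:ℝ) * (m:ℝ) + ((n % Q : ℕ):ℝ) = (n:ℝ) := by exact_mod_cast hdm'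
    have hnmR : (n:ℝ) < (Q:ℝ) * ((m:ℝ) + 1) := by nlinarith
    have h5 : (1/(Q:ℝ)) * n ≤ (m:ℝ) + 1 := by
      rw [one_div, inv_mul_le_iff₀ (by positivity)]
      nlinarith
    linarith
  constructor
  · -- part (i)
    intro s
    apply tendsto_pi_nhds.2
    intro i
    apply tendsto_pi_nhds.2
    intro j
    have hof : (Matrix.of fun _ _ => (N:ℝ)⁻¹) i j = (N:ℝ)⁻¹ := rfl
    rw [hof]
    have hlim0 : Filter.Tendsto (fun k => Φ k s i j - (N:ℝ)⁻¹) Filter.atTop (nhds 0) := by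
      apply squeeze_zero_norm'
        (a := fun k => (1 - γ)⁻¹ ^ 2 * ((1 - γ) ^ ((1 : ℝ) / Q)) ^ (k - s))
      · filter_upwards [Filter.eventually_ge_atTop s] with k hk
        exact part2 s k hk i j
      · have hlnn : 0 ≤ (1 - γ) ^ ((1 : ℝ) / Q) := Real.rpow_nonneg hbase.le _
        have hllt : (1 - γ) ^ ((1 : ℝ) / Q) < 1 :=
          Real.rpow_lt_one hbase.le hbase1 (by positivity)
        have h1 : Filter.Tendsto (fun n : ℕ => ((1 - γ) ^ ((1 : ℝ) / Q)) ^ n)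
            Filter.atTop (nhds 0) := tendsto_pow_atTop_nhds_zero_of_lt_one hlnn hllt
        have h2 : Filter.Tendsto (fun k : ℕ => k - s) Filter.atTop Filter.atTop :=
          Filter.tendsto_sub_atTop_nat s
        have h3 := (h1.comp h2).const_mul ((1 - γ)⁻¹ ^ 2)
        simpa using h3
    have := hlim0.add_const (N:ℝ)⁻¹
    simpa using this
  · intro s k hsk i j
    exact part2 s k hsk i j
end

section
/- Let N ≥ 2 and for each i ∈ {1,…,N} let (𝟙_{S_{i,t}})_{t≥1} be an i.i.d. sequence of Bernoulli random variables with success probability p_i, where p_i ≥ p̂/N for a constant p̂ ∈ (1,2] and all the p_i ∈ (0,1]. Let Γ_k(i) = ∑_{t=1}^k 𝟙_{S_{i,t}} and define α_{k,i} = 1/Γ_k(i) (on the event Γ_k(i) ≥ 1). Then for every q ∈ (0, 1/2), almost surely there exists a (random) index k̃ such that for all k ≥ k̃ and all i ∈ {1,…,N}: α_{k,i} ≤ 2/(k p_i) and |α_{k,i} − 1/(k p_i)| ≤ 2/(k^{3/2−q} p̂²). -/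
/-! The centred count `Γ_k(i) - k p_i` is a sum of `k` independent variables with values in an
interval of length one, so Hoeffding's inequality bounds the probability of
`|Γ_k(i) - k p_i| ≥ k^((1+q)/2)` by `2 exp (-2 k^q)`, which is summable in `k`. By Borel–Cantelli,
almost surely `|Γ_k(i) - k p_i| < k^((1+q)/2)` for all large `k`. Then `Γ_k(i) ≥ k p_i / 2` and
`|1/Γ_k(i) - 1/(k p_i)| ≤ 2 k^((1+q)/2) / (k p_i)^2`, which is of order `k^(q/2 - 3/2)` and hence
eventually below any constant multiple of `k^(q - 3/2)`; there are finitely many agents. -/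

open MeasureTheory ProbabilityTheory Filter Real
open scoped NNReal

lemma summable_exp_neg_mul_rpow {a q : ℝ} (ha : 0 < a) (hq : 0 < q) :
    Summable fun k : ℕ => exp (-a * (k : ℝ) ^ q) := by
  have hlittle := (isLittleO_exp_neg_mul_rpow_atTop ha (-2 / q)).comp_tendsto
    ((tendsto_rpow_atTop hq).comp tendsto_natCast_atTop_atTop)
  refine summable_of_isBigO_nat (Real.summable_nat_rpow.2 (by norm_num : (-2 : ℝ) < -1))
    (hlittle.isBigO.congr_right fun k => ?_)
  simp only [Function.comp_apply]
  rw [← rpow_mul k.cast_nonneg, mul_div_cancel₀ _ hq.ne']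

section

variable {Ω : Type*} [MeasurableSpace Ω] {μ : Measure Ω}

lemma ProbabilityTheory.HasSubgaussianMGF.measure_abs_ge_le [IsFiniteMeasure μ] {X : Ω → ℝ}
    {c : ℝ≥0} (h : HasSubgaussianMGF X c μ) {ε : ℝ} (hε : 0 ≤ ε) :
    μ.real {ω | ε ≤ |X ω|} ≤ 2 * exp (-ε ^ 2 / (2 * c)) := by
  have hsub : {ω | ε ≤ |X ω|} ⊆ {ω | ε ≤ X ω} ∪ {ω | ε ≤ (-X) ω} :=
    fun ω (hω : ε ≤ |X ω|) => le_abs.1 hω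
  calc μ.real {ω | ε ≤ |X ω|}
      ≤ μ.real ({ω | ε ≤ X ω} ∪ {ω | ε ≤ (-X) ω}) := measureReal_mono hsub
    _ ≤ μ.real {ω | ε ≤ X ω} + μ.real {ω | ε ≤ (-X) ω} := measureReal_union_le _ _
    _ ≤ 2 * exp (-ε ^ 2 / (2 * c)) := by
      linarith [h.measure_ge_le hε, h.neg.measure_ge_le hε]

lemma hasSubgaussianMGF_indicator_sub [IsProbabilityMeasure μ] {s : Set Ω} (hs : MeasurableSet s)
    {p : ℝ} (hp : 0 ≤ p) (hμs : μ s = ENNReal.ofReal p) :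
    HasSubgaussianMGF (fun ω => s.indicator (fun _ => (1 : ℝ)) ω - p) (1 / 4) μ := by
  have hmean : μ[s.indicator (fun _ => (1 : ℝ))] = p := by
    rw [integral_indicator_const _ hs, measureReal_def, hμs, ENNReal.toReal_ofReal hp, smul_eq_mul,
      mul_one]
  have h := hasSubgaussianMGF_of_mem_Icc (μ := μ) (a := 0) (b := 1)
    (measurable_const.indicator hs).aemeasurable
    (ae_of_all _ fun ω => ⟨Set.indicator_nonneg (fun _ _ => zero_le_one) ω,
      Set.indicator_le_self' (fun _ _ => zero_le_one) ω⟩)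
  rw [hmean] at h
  convert h using 1
  ext
  norm_num

lemma measure_abs_sum_indicator_sub_ge_le [IsProbabilityMeasure μ] {S : ℕ → Set Ω}
    (hS : ∀ t, MeasurableSet (S t)) (hindep : iIndepSet S μ) {p : ℝ} (hp : 0 ≤ p)
    (hμS : ∀ t, μ (S t) = ENNReal.ofReal p) (k : ℕ) {ε : ℝ} (hε : 0 ≤ ε) :
    μ.real {ω | ε ≤ |∑ t ∈ Finset.Icc 1 k, (S t).indicator (fun _ => (1 : ℝ)) ω - k * p|}
      ≤ 2 * exp (-2 * ε ^ 2 / k) := by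
  have hcenter : iIndepFun (fun t ω => (S t).indicator (fun _ => (1 : ℝ)) ω - p) μ :=
    hindep.iIndepFun_indicator.comp _ fun _ => measurable_id.sub_const p
  have hsum := HasSubgaussianMGF.sum_of_iIndepFun hcenter (s := Finset.Icc 1 k)
    (c := fun _ => 1 / 4) fun t _ => hasSubgaussianMGF_indicator_sub (hS t) hp (hμS t)
  simp only [Finset.sum_sub_distrib, Finset.sum_const, Nat.card_Icc, add_tsub_cancel_right,
    nsmul_eq_mul] at hsum
  convert hsum.measure_abs_ge_le hε using 3
  push_cast
  ring

lemma ae_eventually_notMem_of_measureReal_le [IsFiniteMeasure μ] {s : ℕ → Set Ω} {f : ℕ → ℝ}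
    (hf : Summable f) (hsf : ∀ k, μ.real (s k) ≤ f k) : ∀ᵐ ω ∂μ, ∀ᶠ k in atTop, ω ∉ s k := by
  refine ae_eventually_notMem ?_
  simpa only [ofReal_measureReal (measure_ne_top μ _)] using
    (hf.of_nonneg_of_le (fun _ => measureReal_nonneg) hsf).tsum_ofReal_ne_top

lemma ae_eventually_abs_sum_indicator_sub_lt [IsProbabilityMeasure μ] {S : ℕ → Set Ω}
    (hS : ∀ t, MeasurableSet (S t)) (hindep : iIndepSet S μ) {p : ℝ} (hp : 0 ≤ p)
    (hμS : ∀ t, μ (S t) = ENNReal.ofReal p) {q : ℝ} (hq : 0 < q) :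
    ∀ᵐ ω ∂μ, ∀ᶠ k : ℕ in atTop,
      |∑ t ∈ Finset.Icc 1 k, (S t).indicator (fun _ => (1 : ℝ)) ω - k * p|
        < (k : ℝ) ^ ((1 + q) / 2) := by
  have hexponent (k : ℕ) : -2 * ((k : ℝ) ^ ((1 + q) / 2)) ^ 2 / k = -2 * (k : ℝ) ^ q := by
    rcases k.eq_zero_or_pos with rfl | hk
    · simp [zero_rpow hq.ne']
    · rw [← rpow_natCast, ← rpow_mul k.cast_nonneg, mul_div_assoc, ← rpow_sub_one
        (Nat.cast_pos.2 hk).ne']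
      ring_nf
  have hbad (k : ℕ) :=
    measure_abs_sum_indicator_sub_ge_le hS hindep hp hμS k
      (rpow_nonneg k.cast_nonneg ((1 + q) / 2))
  simp only [hexponent] at hbad
  filter_upwards [ae_eventually_notMem_of_measureReal_le
    ((summable_exp_neg_mul_rpow two_pos hq).mul_left 2) hbad] with ω hω
  filter_upwards [hω] with k hk
  exact lt_of_not_ge hk

end

lemma inv_le_two_div_and_abs_inv_sub_inv_le {G x e : ℝ} (hx : 0 < x) (hG : |G - x| ≤ e)
    (he : 2 * e ≤ x) : G⁻¹ ≤ 2 / x ∧ |G⁻¹ - x⁻¹| ≤ 2 * e / x ^ 2 := by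
  have hGx : x / 2 ≤ G := by linarith [(abs_le.1 hG).1]
  have hG0 : 0 < G := by linarith
  refine ⟨by rwa [inv_le_comm₀ hG0 (by positivity), inv_div], ?_⟩
  rw [inv_sub_inv hG0.ne' hx.ne', abs_div, abs_of_pos (mul_pos hG0 hx), abs_sub_comm,
    div_le_div_iff₀ (mul_pos hG0 hx) (by positivity)]
  have he0 : 0 ≤ e := (abs_nonneg _).trans hG
  calc |G - x| * x ^ 2 ≤ e * x ^ 2 := by gcongr
    _ ≤ 2 * e * (G * x) := by
      nlinarith [mul_nonneg (mul_nonneg he0 hx.le) (by linarith : 0 ≤ 2 * G - x)]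

lemma eventually_inv_le_and_abs_inv_sub_inv_le {G : ℕ → ℝ} {p c q : ℝ} (hp : 0 < p) (hc : c ≠ 0)
    (hq0 : 0 < q) (hq1 : q < 1)
    (hG : ∀ᶠ k : ℕ in atTop, |G k - k * p| < (k : ℝ) ^ ((1 + q) / 2)) :
    ∀ᶠ k : ℕ in atTop, (G k)⁻¹ ≤ 2 / (k * p) ∧
      |(G k)⁻¹ - 1 / (k * p)| ≤ 2 / ((k : ℝ) ^ ((3 : ℝ) / 2 - q) * c ^ 2) := by
  have hlarge {a : ℝ} (ha : 0 < a) (C : ℝ) : ∀ᶠ k : ℕ in atTop, C ≤ (k : ℝ) ^ a :=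
    ((tendsto_rpow_atTop ha).comp tendsto_natCast_atTop_atTop).eventually_ge_atTop C
  filter_upwards [hG, hlarge (a := (1 - q) / 2) (by linarith) (2 / p),
    hlarge (a := q / 2) (by linarith) (c ^ 2 / p ^ 2), eventually_gt_atTop 0]
    with k hGk hsmall hdecay hk
  have hk : (0 : ℝ) < k := Nat.cast_pos.2 hk
  have hkp : 0 < k * p := mul_pos hk hp
  set r := (k : ℝ) ^ ((1 + q) / 2)
  have hr : r * (k : ℝ) ^ ((1 - q) / 2) = k := by
    rw [← rpow_add hk]; ring_nf; exact rpow_one _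
  have hr' : r * (k : ℝ) ^ ((3 : ℝ) / 2 - q) * (k : ℝ) ^ (q / 2) = (k : ℝ) ^ 2 := by
    rw [← rpow_add hk, ← rpow_add hk, ← rpow_natCast]; ring_nf
  have h2r : 2 * r ≤ k * p := by
    rw [div_le_iff₀ hp] at hsmall
    nlinarith [rpow_pos_of_pos hk ((1 + q) / 2)]
  obtain ⟨hinv, habs⟩ := inv_le_two_div_and_abs_inv_sub_inv_le hkp hGk.le h2r
  refine ⟨hinv, (one_div (k * p)).symm ▸ habs.trans ?_⟩
  rw [div_le_div_iff₀ (by positivity) (by positivity)]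
  rw [div_le_iff₀ (by positivity)] at hdecay
  have hA : 0 ≤ r * (k : ℝ) ^ ((3 : ℝ) / 2 - q) := by positivity
  nlinarith [mul_le_mul_of_nonneg_left hdecay hA]

theorem stmt_9_general {Ω : Type*} [MeasurableSpace Ω] (μ : Measure Ω) [IsProbabilityMeasure μ]
    (N : ℕ) (p : Fin N → ℝ) (phat : ℝ)
    (hphat1 : 1 < phat)
    (hp0 : ∀ i, 0 < p i)
    (S : Fin N → ℕ → Set Ω) (hSm : ∀ i t, MeasurableSet (S i t))
    (hindep : ∀ i, iIndepSet (fun t => S i t) μ)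
    (hprob : ∀ i t, μ (S i t) = ENNReal.ofReal (p i))
    (Γ : ℕ → Fin N → Ω → ℝ)
    (hΓ : ∀ k i ω, Γ k i ω = ∑ t ∈ Finset.Icc 1 k, (S i t).indicator (fun _ => (1 : ℝ)) ω)
    (α : ℕ → Fin N → Ω → ℝ) (hα : ∀ k i ω, α k i ω = (Γ k i ω)⁻¹)
    (q : ℝ) (hq0 : 0 < q) (hq : q < 1 / 2) :
    ∀ᵐ ω ∂μ, ∃ ktil : ℕ, ∀ k ≥ ktil, ∀ i,
      α k i ω ≤ 2 / (k * p i) ∧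
      |α k i ω - 1 / (k * p i)| ≤ 2 / ((k : ℝ) ^ ((3 : ℝ) / 2 - q) * phat ^ 2) := by
  have hconc (i : Fin N) : ∀ᵐ ω ∂μ, ∀ᶠ k : ℕ in atTop,
      |Γ k i ω - k * p i| < (k : ℝ) ^ ((1 + q) / 2) := by
    simpa only [hΓ] using
      ae_eventually_abs_sum_indicator_sub_lt (hSm i) (hindep i) (hp0 i).le (hprob i) hq0
  filter_upwards [ae_all_iff.2 hconc] with ω hω
  obtain ⟨K, hK⟩ := eventually_atTop.1 <| eventually_all.2 fun i =>
    eventually_inv_le_and_abs_inv_sub_inv_le (hp0 i) (by positivity) hq0 (by linarith) (hω i)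
  exact ⟨K, fun k hk i => by simpa only [hα] using hK k hk i⟩

/-- For each agent `i`, let `(𝟙_{S_{i,t}})_{t≥1}` be i.i.d. Bernoulli with success
probability `p_i ≥ p̂/N` (`p̂ ∈ (1,2]`, `p_i ∈ (0,1]`), `Γ_k(i) = ∑_{t=1}^k 𝟙_{S_{i,t}}` and
`α_{k,i} = 1/Γ_k(i)`.  Then for every `q ∈ (0, 1/2)`, almost surely there is a random index `k̃`
such that for all `k ≥ k̃` and all `i`:
`α_{k,i} ≤ 2/(k p_i)` and `|α_{k,i} − 1/(k p_i)| ≤ 2/(k^{3/2−q} p̂²)`. -/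
theorem stmt_9 {Ω : Type*} [MeasurableSpace Ω] (μ : Measure Ω) [IsProbabilityMeasure μ]
    (N : ℕ) (hN : 2 ≤ N) (p : Fin N → ℝ) (phat : ℝ)
    (hphat1 : 1 < phat) (hphat2 : phat ≤ 2)
    (hp0 : ∀ i, 0 < p i) (hp1 : ∀ i, p i ≤ 1) (hplb : ∀ i, phat / N ≤ p i)
    (S : Fin N → ℕ → Set Ω) (hSm : ∀ i t, MeasurableSet (S i t))
    (hindep : ∀ i, iIndepSet (fun t => S i t) μ)
    (hprob : ∀ i t, μ (S i t) = ENNReal.ofReal (p i))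
    (Γ : ℕ → Fin N → Ω → ℝ)
    (hΓ : ∀ k i ω, Γ k i ω = ∑ t ∈ Finset.Icc 1 k, (S i t).indicator (fun _ => (1 : ℝ)) ω)
    (α : ℕ → Fin N → Ω → ℝ) (hα : ∀ k i ω, α k i ω = (Γ k i ω)⁻¹)
    (q : ℝ) (hq0 : 0 < q) (hq : q < 1 / 2) :
    ∀ᵐ ω ∂μ, ∃ ktil : ℕ, ∀ k ≥ ktil, ∀ i,
      α k i ω ≤ 2 / (k * p i) ∧
      |α k i ω - 1 / (k * p i)| ≤ 2 / ((k : ℝ) ^ ((3 : ℝ) / 2 - q) * phat ^ 2) :=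
  stmt_9_general μ N p phat hphat1 hp0 S hSm hindep hprob Γ hΓ α hα q hq0 hq
end

section
/- Let G = ({1,…,N}, E) be a connected undirected graph and let W be a random N×N matrix (on some probability space) such that: W is row-stochastic almost surely, its diagonal entries are positive almost surely, E[W] is doubly stochastic, and E[W]_{ij} > 0 whenever {i,j} ∈ E. Then there exists a scalar λ ∈ (0,1) such that for D = W − (1/N) 𝟙𝟙ᵀ W one has E[‖D z‖²] ≤ λ ‖z‖² for all z ∈ ℝ^N. -/
/-!
Put `y = z - m𝟙` with `m` the mean of `z`. As `W` fixes constants, `D z` is the centering of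
`W y`, so `‖D z‖² ≤ ‖W y‖²`. Row by row, the square of a convex combination is the weighted mean of
the squares minus half the weighted pairwise squared differences; keeping only the pairs through
the diagonal entry and taking expectations (the columns of `E[W]` sum to one) gives
`E‖D z‖² ≤ ‖y‖² - ½ ∑_{j,k} E[W_jj W_jk] (z_j - z_k)²`.
Since `W_jj > 0` a.s., the weights `E[W_jj W_jk]` are positive on the edges of `G`, and by
connectivity and compactness of the unit sphere this Dirichlet form dominates `ε ‖y‖²`.
Since `‖y‖ ≤ ‖z‖`, `λ = 1 - min (ε/2) (1/2)` works.
-/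

open MeasureTheory Finset Matrix

section Mean

variable {ι : Type*} [Fintype ι]

theorem sum_sub_mean_eq_zero (v : ι → ℝ) :
    ∑ a, (v a - (Fintype.card ι : ℝ)⁻¹ * ∑ i, v i) = 0 := by
  rcases isEmpty_or_nonempty ι with _ | _
  · simp
  · rw [sum_sub_distrib, sum_const, card_univ, nsmul_eq_mul, mul_inv_cancel_left₀ (by positivity),
      sub_self]

theorem sum_sq_sub_mean_le (v : ι → ℝ) :
    ∑ a, (v a - (Fintype.card ι : ℝ)⁻¹ * ∑ i, v i) ^ 2 ≤ ∑ a, v a ^ 2 := by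
  set m := (Fintype.card ι : ℝ)⁻¹ * ∑ i, v i
  have hexpand : ∑ a, (v a - m) ^ 2 = ∑ a, v a ^ 2 - m * ∑ a, (v a - m) - m * ∑ a, v a := by
    simp only [mul_sum, ← sum_sub_distrib]
    exact sum_congr rfl fun a _ => by ring
  have hm : 0 ≤ m * ∑ a, v a := by
    simp only [m, mul_comm _ (∑ a, v a), ← mul_assoc, ← sq]; positivity
  rw [hexpand, sum_sub_mean_eq_zero, mul_zero, sub_zero]
  linarith

theorem sub_mean_add_const (v : ι → ℝ) (c : ℝ) (a : ι) :
    v a + c - (Fintype.card ι : ℝ)⁻¹ * ∑ i, (v i + c)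
      = v a - (Fintype.card ι : ℝ)⁻¹ * ∑ i, v i := by
  have : Nonempty ι := ⟨a⟩
  have : (Fintype.card ι : ℝ) ≠ 0 := Nat.cast_ne_zero.2 Fintype.card_ne_zero
  rw [sum_add_distrib, sum_const, card_univ, nsmul_eq_mul, mul_add, inv_mul_cancel_left₀ this]
  ring

end Mean

section WeightedVariance

variable {ι : Type*} [Fintype ι]

theorem sum_sum_mul_mul_sq_sub {w : ι → ℝ} (hw : ∑ j, w j = 1) (y : ι → ℝ) :
    ∑ j, ∑ k, w j * w k * (y j - y k) ^ 2 = 2 * (∑ j, w j * y j ^ 2 - (∑ j, w j * y j) ^ 2) := by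
  have hexpand : ∀ j k, w j * w k * (y j - y k) ^ 2
      = w k * (w j * y j ^ 2) + w j * (w k * y k ^ 2) - 2 * (w j * y j) * (w k * y k) :=
    fun j k => by ring
  simp only [hexpand, sum_add_distrib, sum_sub_distrib, ← mul_sum, ← sum_mul, hw, one_mul]
  ring

theorem sq_sum_mul_le {w : ι → ℝ} (hw0 : ∀ j, 0 ≤ w j) (hw : ∑ j, w j = 1) (y : ι → ℝ) (a : ι) :
    (∑ j, w j * y j) ^ 2 ≤ ∑ j, w j * y j ^ 2 - 1 / 2 * ∑ k, w a * w k * (y a - y k) ^ 2 := by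
  have hdiag : ∑ k, w a * w k * (y a - y k) ^ 2 ≤ ∑ j, ∑ k, w j * w k * (y j - y k) ^ 2 :=
    single_le_sum (f := fun j => ∑ k, w j * w k * (y j - y k) ^ 2)
      (fun j _ => sum_nonneg fun k _ => by have := hw0 j; have := hw0 k; positivity) (mem_univ a)
  rw [sum_sum_mul_mul_sq_sub hw] at hdiag
  linarith

end WeightedVariance

section RowStochastic

variable {ι : Type*} [Fintype ι]

theorem abs_apply_le_one_of_sum_eq_one {A : Matrix ι ι ℝ}
    (hA0 : ∀ i j, 0 ≤ A i j) (hA1 : ∀ i, ∑ j, A i j = 1) (i j : ι) : |A i j| ≤ 1 := by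
  rw [abs_of_nonneg (hA0 i j), ← hA1 i]
  exact single_le_sum (fun k _ => hA0 i k) (mem_univ j)

theorem mulVec_sub_smul_mul_mulVec (A : Matrix ι ι ℝ) (c : ℝ) (z : ι → ℝ) (a : ι) :
    ((A - c • (of (fun _ _ => (1 : ℝ)) * A)) *ᵥ z) a = (A *ᵥ z) a - c * ∑ i, (A *ᵥ z) i := by
  rw [sub_mulVec, smul_mulVec, ← mulVec_mulVec]
  simp only [Pi.sub_apply, Pi.smul_apply, smul_eq_mul, mulVec, dotProduct, of_apply, one_mul]

theorem sum_sq_mulVec_sub_mean_le {A : Matrix ι ι ℝ} (hA0 : ∀ i j, 0 ≤ A i j)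
    (hA1 : ∀ i, ∑ j, A i j = 1) (z : ι → ℝ) :
    ∑ a, ((A - (Fintype.card ι : ℝ)⁻¹ • (of (fun _ _ => (1 : ℝ)) * A)) *ᵥ z) a ^ 2
      ≤ ∑ j, (∑ a, A a j) * (z j - (Fintype.card ι : ℝ)⁻¹ * ∑ i, z i) ^ 2
        - 1 / 2 * ∑ j, ∑ k, A j j * A j k * (z j - z k) ^ 2 := by
  set m := (Fintype.card ι : ℝ)⁻¹ * ∑ i, z i
  set y : ι → ℝ := fun j => z j - m
  have hAz : ∀ a, (A *ᵥ z) a = (A *ᵥ y) a + m := fun a => by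
    simp only [mulVec, dotProduct, y, mul_sub, sum_sub_distrib, ← sum_mul, hA1, one_mul,
      sub_add_cancel]
  have hDz : ∀ a, ((A - (Fintype.card ι : ℝ)⁻¹ • (of (fun _ _ => (1 : ℝ)) * A)) *ᵥ z) a
      = (A *ᵥ y) a - (Fintype.card ι : ℝ)⁻¹ * ∑ i, (A *ᵥ y) i := fun a => by
    simp only [mulVec_sub_smul_mul_mulVec, hAz, sub_mean_add_const]
  have hsq_row : ∀ a, (A *ᵥ y) a ^ 2
      ≤ ∑ j, A a j * y j ^ 2 - 1 / 2 * ∑ k, A a a * A a k * (z a - z k) ^ 2 := fun a => by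
    simpa only [y, sub_sub_sub_cancel_right, mulVec, dotProduct] using
      sq_sum_mul_le (hA0 a) (hA1 a) y a
  calc ∑ a, ((A - (Fintype.card ι : ℝ)⁻¹ • (of (fun _ _ => (1 : ℝ)) * A)) *ᵥ z) a ^ 2
      ≤ ∑ a, (A *ᵥ y) a ^ 2 := by simpa only [hDz] using sum_sq_sub_mean_le (A *ᵥ y)
    _ ≤ ∑ a, (∑ j, A a j * y j ^ 2 - 1 / 2 * ∑ k, A a a * A a k * (z a - z k) ^ 2) :=
      sum_le_sum fun a _ => hsq_row a
    _ = _ := by rw [sum_sub_distrib, sum_comm, ← mul_sum]; simp only [sum_mul, y]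

end RowStochastic

theorem exists_pos_mul_norm_sq_le {E : Type*} [NormedAddCommGroup E] [NormedSpace ℝ E]
    [FiniteDimensional ℝ E] {q : E → ℝ} (hq : Continuous q)
    (hsmul : ∀ (c : ℝ) x, q (c • x) = c ^ 2 * q x) (hpos : ∀ x, x ≠ 0 → 0 < q x) :
    ∃ ε > 0, ∀ x, ε * ‖x‖ ^ 2 ≤ q x := by
  have hq0 : q 0 = 0 := by simpa using hsmul 0 0
  rcases subsingleton_or_nontrivial E with hE | hE
  · exact ⟨1, one_pos, fun x => by simp [Subsingleton.elim x 0, hq0]⟩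
  obtain ⟨u, hu, hmin⟩ := (isCompact_sphere (0 : E) 1).exists_isMinOn
    (NormedSpace.sphere_nonempty.2 zero_le_one) hq.continuousOn
  refine ⟨q u, hpos u (ne_zero_of_mem_unit_sphere ⟨u, hu⟩), fun x => ?_⟩
  rcases eq_or_ne x 0 with rfl | hx
  · simp [hq0]
  have hx' : ‖x‖⁻¹ • x ∈ Metric.sphere (0 : E) 1 := by
    simp [norm_smul, norm_ne_zero_iff.2 hx]
  calc q u * ‖x‖ ^ 2 ≤ q (‖x‖⁻¹ • x) * ‖x‖ ^ 2 := by gcongr; exact hmin hx'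
    _ = q x := by
      rw [hsmul, inv_pow, mul_comm, ← mul_assoc, mul_inv_cancel₀ (by positivity), one_mul]

theorem SimpleGraph.Preconnected.apply_eq_of_forall_adj {V α : Type*} {G : SimpleGraph V}
    (hG : G.Preconnected) {f : V → α} (hf : ∀ i j, G.Adj i j → f i = f j) (i j : V) :
    f i = f j := by
  obtain ⟨w⟩ := hG i j
  induction w with
  | nil => rfl
  | cons hadj _ ih => exact (hf _ _ hadj).trans ih

theorem SimpleGraph.Connected.exists_pos_mul_sum_sq_le {V : Type*} [Fintype V]
    {G : SimpleGraph V} (hG : G.Connected) {F : V → V → ℝ} (hF : ∀ j k, 0 ≤ F j k)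
    (hFG : ∀ j k, G.Adj j k → 0 < F j k) :
    ∃ ε > 0, ∀ y : V → ℝ,
      ε * ∑ a, y a ^ 2 ≤ ∑ j, ∑ k, F j k * (y j - y k) ^ 2 + (∑ a, y a) ^ 2 := by
  -- The `(∑ a, y a) ^ 2` term rules out the constants, the kernel of the Dirichlet form.
  set q : (V → ℝ) → ℝ := fun y => ∑ j, ∑ k, F j k * (y j - y k) ^ 2 + (∑ a, y a) ^ 2
  have hpos : ∀ y, y ≠ 0 → 0 < q y := by
    intro y hy
    by_contra! hq
    have hdir : 0 ≤ ∑ j, ∑ k, F j k * (y j - y k) ^ 2 :=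
      sum_nonneg fun j _ => sum_nonneg fun k _ => mul_nonneg (hF j k) (sq_nonneg _)
    have hsum : (∑ a, y a) ^ 2 = 0 := by linarith [sq_nonneg (∑ a, y a)]
    have hterm : ∀ j k, F j k * (y j - y k) ^ 2 = 0 := by
      have h0 : ∑ j, ∑ k, F j k * (y j - y k) ^ 2 = 0 := by linarith [sq_nonneg (∑ a, y a)]
      intro j k
      rw [sum_eq_zero_iff_of_nonneg fun j _ =>
        sum_nonneg fun k _ => mul_nonneg (hF j k) (sq_nonneg _)] at h0
      exact (sum_eq_zero_iff_of_nonneg fun k _ => mul_nonneg (hF j k) (sq_nonneg _)).1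
        (h0 j (mem_univ j)) k (mem_univ k)
    have hconst : ∀ j k, y j = y k := hG.preconnected.apply_eq_of_forall_adj fun j k hjk => by
      simpa [(hFG j k hjk).ne', sub_eq_zero] using hterm j k
    obtain ⟨v⟩ := hG.nonempty
    have hv : (Fintype.card V : ℝ) * y v = 0 := by simpa [hconst _ v] using hsum
    exact hy (funext fun a => by
      rw [hconst a v]
      exact (mul_eq_zero.1 hv).resolve_left (Nat.cast_ne_zero.2 (Fintype.card_pos_iff.2 ⟨v⟩).ne'))
  obtain ⟨ε, hε, hle⟩ := exists_pos_mul_norm_sq_le (q := fun x : EuclideanSpace ℝ V => q x)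
    (by fun_prop) (fun c x => by simp only [q, PiLp.smul_apply, smul_eq_mul, ← mul_sub, mul_pow,
      mul_left_comm (F _ _), ← mul_sum]; ring)
    (fun x hx => hpos x (by simpa using hx))
  refine ⟨ε, hε, fun y => ?_⟩
  simpa [EuclideanSpace.real_norm_sq_eq] using hle (WithLp.toLp 2 y)

theorem SimpleGraph.Connected.exists_pos_mul_sum_sq_sub_mean_le {V : Type*} [Fintype V]
    {G : SimpleGraph V} (hG : G.Connected) {F : V → V → ℝ} (hF : ∀ j k, 0 ≤ F j k)
    (hFG : ∀ j k, G.Adj j k → 0 < F j k) :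
    ∃ ε > 0, ∀ z : V → ℝ,
      ε * ∑ a, (z a - (Fintype.card V : ℝ)⁻¹ * ∑ i, z i) ^ 2
        ≤ ∑ j, ∑ k, F j k * (z j - z k) ^ 2 := by
  obtain ⟨ε, hε, h⟩ := hG.exists_pos_mul_sum_sq_le hF hFG
  refine ⟨ε, hε, fun z => ?_⟩
  simpa only [sub_sub_sub_cancel_right, sum_sub_mean_eq_zero, ne_eq, OfNat.ofNat_ne_zero,
    not_false_eq_true, zero_pow, add_zero] using h fun a => z a - (Fintype.card V : ℝ)⁻¹ * ∑ i, z i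

section RandomMatrix

variable {Ω : Type*} [MeasurableSpace Ω] {μ : Measure Ω}

theorem integral_mul_pos_of_ae_pos {f g : Ω → ℝ} (hf : ∀ᵐ ω ∂μ, 0 < f ω) (hg : 0 ≤ᵐ[μ] g)
    (hfg : Integrable (fun ω => f ω * g ω) μ) (hpos : 0 < ∫ ω, g ω ∂μ) :
    0 < ∫ ω, f ω * g ω ∂μ := by
  have hfg0 : 0 ≤ᵐ[μ] fun ω => f ω * g ω := by
    filter_upwards [hf, hg] with ω hfω hgω using mul_nonneg hfω.le hgω
  refine (integral_nonneg_of_ae hfg0).lt_of_ne fun h => hpos.ne' ?_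
  have hzero := (integral_eq_zero_iff_of_nonneg_ae hfg0 hfg).1 h.symm
  refine integral_eq_zero_of_ae ?_
  filter_upwards [hf, hzero] with ω hfω hω
  exact (mul_eq_zero.1 hω).resolve_left hfω.ne'

variable [IsFiniteMeasure μ] {ι : Type*} [Fintype ι] {W : Ω → Matrix ι ι ℝ}
  (hWm : ∀ i j, Measurable fun ω => W ω i j)
  (hrow : ∀ᵐ ω ∂μ, (∀ i j, 0 ≤ W ω i j) ∧ ∀ i, ∑ j, W ω i j = 1)
include hWm hrow

theorem integrable_apply_of_rowStochastic (i j : ι) : Integrable (fun ω => W ω i j) μ :=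
  .of_bound (hWm i j).aestronglyMeasurable 1 <| by
    filter_upwards [hrow] with ω hω using abs_apply_le_one_of_sum_eq_one hω.1 hω.2 i j

theorem integrable_apply_mul_apply_of_rowStochastic (i j k l : ι) :
    Integrable (fun ω => W ω i j * W ω k l) μ :=
  .of_bound ((hWm i j).mul (hWm k l)).aestronglyMeasurable 1 <| by
    filter_upwards [hrow] with ω hω
    rw [Real.norm_eq_abs, abs_mul]
    exact mul_le_one₀ (abs_apply_le_one_of_sum_eq_one hω.1 hω.2 i j) (abs_nonneg _)
      (abs_apply_le_one_of_sum_eq_one hω.1 hω.2 k l)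

theorem integral_sum_sq_mulVec_sub_mean_le (hEcol : ∀ j, ∑ i, ∫ ω, W ω i j ∂μ = 1)
    (z : ι → ℝ) :
    ∫ ω, ∑ a, ((W ω - (Fintype.card ι : ℝ)⁻¹ • (of (fun _ _ => (1 : ℝ)) * W ω)) *ᵥ z) a ^ 2 ∂μ
      ≤ ∑ j, (z j - (Fintype.card ι : ℝ)⁻¹ * ∑ i, z i) ^ 2
        - 1 / 2 * ∑ j, ∑ k, (∫ ω, W ω j j * W ω j k ∂μ) * (z j - z k) ^ 2 := by
  set y : ι → ℝ := fun j => z j - (Fintype.card ι : ℝ)⁻¹ * ∑ i, z i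
  have hW := integrable_apply_of_rowStochastic hWm hrow
  have hWW := integrable_apply_mul_apply_of_rowStochastic hWm hrow
  have hcol : ∀ j, Integrable (fun ω => (∑ a, W ω a j) * y j ^ 2) μ := fun j =>
    (integrable_finsetSum _ fun a _ => hW a j).mul_const _
  have hpair : ∀ j k, Integrable (fun ω => W ω j j * W ω j k * (z j - z k) ^ 2) μ := fun j k =>
    (hWW j j j k).mul_const _
  have hpairs : Integrable (fun ω => ∑ j, ∑ k, W ω j j * W ω j k * (z j - z k) ^ 2) μ :=
    integrable_finsetSum _ fun j _ => integrable_finsetSum _ fun k _ => hpair j k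
  calc _ ≤ ∫ ω, (∑ j, (∑ a, W ω a j) * y j ^ 2
          - 1 / 2 * ∑ j, ∑ k, W ω j j * W ω j k * (z j - z k) ^ 2) ∂μ := by
        refine integral_mono_of_nonneg (.of_forall fun ω => by positivity)
          ((integrable_finsetSum _ fun j _ => hcol j).sub (hpairs.const_mul _)) ?_
        filter_upwards [hrow] with ω hω using sum_sq_mulVec_sub_mean_le hω.1 hω.2 z
    _ = _ := by
      rw [integral_sub (integrable_finsetSum _ fun j _ => hcol j) (hpairs.const_mul _),
        integral_const_mul, integral_finsetSum _ fun j _ => hcol j,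
        integral_finsetSum _ fun j _ => integrable_finsetSum _ fun k _ => hpair j k]
      congr 1
      · refine sum_congr rfl fun j _ => ?_
        rw [integral_mul_const, integral_finsetSum _ fun a _ => hW a j, hEcol j, one_mul]
      · refine congrArg _ (sum_congr rfl fun j _ => ?_)
        rw [integral_finsetSum _ fun k _ => hpair j k]
        exact sum_congr rfl fun k _ => integral_mul_const _ _

end RandomMatrix

theorem stmt_11_general {Ω : Type*} [MeasurableSpace Ω] (μ : Measure Ω) [IsProbabilityMeasure μ]
    (N : ℕ)
    (G : SimpleGraph (Fin N)) (hG : G.Connected)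
    (W : Ω → Matrix (Fin N) (Fin N) ℝ) (hWm : ∀ i j, Measurable (fun ω => W ω i j))
    (hrow : ∀ᵐ ω ∂μ, (∀ i j, 0 ≤ W ω i j) ∧ ∀ i, ∑ j, W ω i j = 1)
    (hdiag : ∀ᵐ ω ∂μ, ∀ i, 0 < W ω i i)
    (hEcol : ∀ j, ∑ i, ∫ ω, W ω i j ∂μ = 1)
    (hEpos : ∀ i j, G.Adj i j → 0 < ∫ ω, W ω i j ∂μ) :
    ∃ lam : ℝ, lam ∈ Set.Ioo (0 : ℝ) 1 ∧ ∀ z : Fin N → ℝ,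
      (∫ ω, ∑ a, ((W ω - (N : ℝ)⁻¹ • ((Matrix.of fun _ _ => (1 : ℝ)) * W ω)).mulVec z a) ^ 2 ∂μ)
        ≤ lam * ∑ a, (z a) ^ 2 := by
  have hF : ∀ j k, 0 ≤ ∫ ω, W ω j j * W ω j k ∂μ := fun j k => integral_nonneg_of_ae <| by
    filter_upwards [hrow] with ω hω using mul_nonneg (hω.1 j j) (hω.1 j k)
  have hFG : ∀ j k, G.Adj j k → 0 < ∫ ω, W ω j j * W ω j k ∂μ := fun j k hjk =>
    integral_mul_pos_of_ae_pos (hdiag.mono fun _ h => h j) (hrow.mono fun _ h => h.1 j k)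
      (integrable_apply_mul_apply_of_rowStochastic hWm hrow j j j k) (hEpos j k hjk)
  obtain ⟨ε, hε, hpoincare⟩ := hG.exists_pos_mul_sum_sq_sub_mean_le hF hFG
  set κ := min (ε / 2) (1 / 2)
  have hκ : 0 < κ := lt_min (by positivity) one_half_pos
  have hκ_half : κ ≤ 1 / 2 := min_le_right _ _
  refine ⟨1 - κ, ⟨by linarith, by linarith⟩, fun z => ?_⟩
  have hexp := integral_sum_sq_mulVec_sub_mean_le hWm hrow hEcol z
  have hgap := hpoincare z
  simp only [Fintype.card_fin] at hexp hgap
  have hvar : 0 ≤ ∑ a, (z a - (N : ℝ)⁻¹ * ∑ i, z i) ^ 2 := by positivity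
  calc _ ≤ ∑ a, (z a - (N : ℝ)⁻¹ * ∑ i, z i) ^ 2
        - 1 / 2 * ∑ j, ∑ k, (∫ ω, W ω j j * W ω j k ∂μ) * (z j - z k) ^ 2 := hexp
    _ ≤ (1 - κ) * ∑ a, (z a - (N : ℝ)⁻¹ * ∑ i, z i) ^ 2 := by
      nlinarith [min_le_left (ε / 2) (1 / 2)]
    _ ≤ (1 - κ) * ∑ a, z a ^ 2 := by
      simpa only [Fintype.card_fin] using
        mul_le_mul_of_nonneg_left (sum_sq_sub_mean_le z) (by linarith : 0 ≤ 1 - κ)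

/-- For a connected graph `G` on `{1,…,N}` and a random matrix `W` that is a.s.
row-stochastic with a.s. positive diagonal, whose expectation is doubly stochastic with
`E[W]_{ij} > 0` on edges of `G`, there is `λ ∈ (0,1)` such that
`E[‖(W − (1/N)𝟙𝟙ᵀ W) z‖²] ≤ λ ‖z‖²` for all `z ∈ ℝ^N`. -/
theorem stmt_11 {Ω : Type*} [MeasurableSpace Ω] (μ : Measure Ω) [IsProbabilityMeasure μ]
    (N : ℕ) (hN : 1 ≤ N)
    (G : SimpleGraph (Fin N)) (hG : G.Connected)
    (W : Ω → Matrix (Fin N) (Fin N) ℝ) (hWm : ∀ i j, Measurable (fun ω => W ω i j))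
    (hrow : ∀ᵐ ω ∂μ, (∀ i j, 0 ≤ W ω i j) ∧ ∀ i, ∑ j, W ω i j = 1)
    (hdiag : ∀ᵐ ω ∂μ, ∀ i, 0 < W ω i i)
    (hErow : ∀ i, ∑ j, ∫ ω, W ω i j ∂μ = 1)
    (hEcol : ∀ j, ∑ i, ∫ ω, W ω i j ∂μ = 1)
    (hEnn : ∀ i j, 0 ≤ ∫ ω, W ω i j ∂μ)
    (hEpos : ∀ i j, G.Adj i j → 0 < ∫ ω, W ω i j ∂μ) :
    ∃ lam : ℝ, lam ∈ Set.Ioo (0 : ℝ) 1 ∧ ∀ z : Fin N → ℝ,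
      (∫ ω, ∑ a, ((W ω - (N : ℝ)⁻¹ • ((Matrix.of fun _ _ => (1 : ℝ)) * W ω)).mulVec z a) ^ 2 ∂μ)
        ≤ lam * ∑ a, (z a) ^ 2 :=
  stmt_11_general μ N G hG W hWm hrow hdiag hEcol hEpos
end
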